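/- arXiv:2208.05333 — 8 statements merged into one kernel-verified Lean document; each statement's English description precedes it below -/
import Mathlib

section
/- Normal factor graph duality for pairwise models: with the primal and dual partition functions defined in the context, Z_d = q^{|E|} · Z_p. That is, for every finite types V, E, endpoint maps s, t : E → V, integer q ≥ 1, edge factors ψ : E → (ZMod q → ℂ) and vertex factors φ : V → (ZMod q → ℂ), one has Σ_{ỹ : E → ZMod q} Π_{e∈E} ψ̃_e(ỹ(e)) · Π_{v∈V} φ̃_v(x̃_v(ỹ)) = q^{|E|} · Σ_{x : V → ZMod q} Π_{e∈E} ψ_e(x(s e) − x(t e)) · Π_{v∈V} φ_v(x(v)). -/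
open scoped BigOperators

/-- The character value ω^{a·b} = exp(−2πi·a·b/q). -/
noncomputable def omegaPow (q : ℕ) (a b : ZMod q) : ℂ :=
  Complex.exp (-2 * Real.pi * Complex.I * ((a.val * b.val : ℕ) : ℂ) / (q : ℂ))

/-- The discrete Fourier transform of `f : ZMod q → ℂ`. -/
noncomputable def dft (q : ℕ) [NeZero q] (f : ZMod q → ℂ) (b : ZMod q) : ℂ :=
  ∑ a : ZMod q, f a * omegaPow q a b

/-- The dual vertex variable x̃_v(yt). -/
noncomputable def dualX {V E : Type*} [Fintype E] [DecidableEq V]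
    (s t : E → V) (q : ℕ) (yt : E → ZMod q) (v : V) : ZMod q :=
  -((∑ e ∈ Finset.univ.filter (fun e => s e = v), yt e) -
     ∑ e ∈ Finset.univ.filter (fun e => t e = v), yt e)

/-!
Write `χ` for the standard additive character of `ZMod q`, so that `ω^{a·b} = χ(-(a b))`.
Expanding every transform in `Z_d` turns it into a sum over edge labels `a`, vertex labels `x`
and dual labels `ỹ` of `∏ ψ_e(a_e) ∏ φ_v(x_v) · χ(∑_e ỹ_e (y_e(x) - a_e))`; the vertex part of
the exponent becomes an edge sum because `x̃` is minus the transpose of the incidence map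
`x ↦ y(x)`. Summing over `ỹ` first, character orthogonality on `E → ZMod q` leaves
`q^{|E|}` exactly when `a = y(x)`, which collapses the sum over `a` to `q^{|E|} Z_p`.
-/

open Finset

lemma AddChar.map_sum_eq_prod {ι A M : Type*} [AddCommMonoid A] [CommMonoid M]
    (ψ : AddChar A M) (s : Finset ι) (f : ι → A) : ψ (∑ i ∈ s, f i) = ∏ i ∈ s, ψ (f i) :=
  map_prod ψ.toMonoidHom (fun i => Multiplicative.ofAdd (f i)) s

section
variable {q : ℕ} [NeZero q]

lemma omegaPow_eq_stdAddChar (a b : ZMod q) : omegaPow q a b = ZMod.stdAddChar (-(a * b)) := by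
  have hcast : -(a * b) = ((-(a.val * b.val : ℕ) : ℤ) : ZMod q) := by simp
  rw [omegaPow, hcast, ZMod.stdAddChar_coe]
  push_cast
  ring_nf

lemma dft_apply_eq_sum (f : ZMod q → ℂ) (b : ZMod q) :
    dft q f b = ∑ a, f a * ZMod.stdAddChar (-(a * b)) := by
  simp only [dft, omegaPow_eq_stdAddChar]

lemma prod_dft {ι : Type*} [Fintype ι] [DecidableEq ι] (f : ι → ZMod q → ℂ) (b : ι → ZMod q) :
    ∏ i, dft q (f i) (b i) =
      ∑ a : ι → ZMod q, (∏ i, f i (a i)) * ZMod.stdAddChar (-∑ i, a i * b i) := by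
  simp only [dft_apply_eq_sum, Fintype.prod_sum, ← sum_neg_distrib, AddChar.map_sum_eq_prod,
    prod_mul_distrib]

lemma sum_stdAddChar_sum_mul {ι : Type*} [Fintype ι] [DecidableEq ι] (c : ι → ZMod q) :
    ∑ y : ι → ZMod q, ZMod.stdAddChar (∑ i, y i * c i) =
      if c = 0 then (q : ℂ) ^ Fintype.card ι else 0 := by
  simp only [AddChar.map_sum_eq_prod]
  rw [← Fintype.prod_sum (fun i b => ZMod.stdAddChar (b * c i))]
  simp only [AddChar.sum_mulShift _ (ZMod.isPrimitive_stdAddChar q), ZMod.card, Nat.cast_ite,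
    Nat.cast_zero]
  rw [Fintype.prod_ite_zero, prod_const, card_univ]
  simp [funext_iff]

end

lemma sum_mul_sum_filter_eq {V E R : Type*} [Fintype V] [Fintype E] [DecidableEq V]
    [NonUnitalNonAssocSemiring R] (g : E → V) (x : V → R) (y : E → R) :
    ∑ v, x v * ∑ e with g e = v, y e = ∑ e, x (g e) * y e := by
  simp only [mul_sum]
  rw [← sum_fiberwise univ g (fun e => x (g e) * y e)]
  refine sum_congr rfl fun v _ => sum_congr rfl fun e he => ?_
  rw [(mem_filter.1 he).2]

section
variable {V E : Type*} [Fintype V] [Fintype E] [DecidableEq V] {q : ℕ}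

def edgeVar (s t : E → V) (x : V → ZMod q) : E → ZMod q := fun e => x (s e) - x (t e)

lemma sum_mul_dualX (s t : E → V) (x : V → ZMod q) (yt : E → ZMod q) :
    ∑ v, x v * dualX s t q yt v = -∑ e, yt e * edgeVar s t x e := by
  simp only [dualX, edgeVar, mul_neg, mul_sub, sum_neg_distrib, sum_sub_distrib,
    sum_mul_sum_filter_eq, mul_comm (yt _), sub_mul]

variable [DecidableEq E] [NeZero q]

lemma prod_dft_mul_prod_dft_dualX (s t : E → V) (ψ : E → ZMod q → ℂ) (φ : V → ZMod q → ℂ)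
    (yt : E → ZMod q) :
    (∏ e, dft q (ψ e) (yt e)) * ∏ v, dft q (φ v) (dualX s t q yt v) =
      ∑ a : E → ZMod q, ∑ x : V → ZMod q, ((∏ e, ψ e (a e)) * ∏ v, φ v (x v)) *
        ZMod.stdAddChar (∑ e, yt e * (edgeVar s t x - a) e) := by
  rw [prod_dft, prod_dft, sum_mul_sum]
  refine sum_congr rfl fun a _ => sum_congr rfl fun x _ => ?_
  rw [mul_mul_mul_comm, ← AddChar.map_add_eq_mul, sum_mul_dualX, neg_neg]
  congr 2
  simp only [Pi.sub_apply, mul_sub, sum_sub_distrib, mul_comm (a _)]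
  ring

end

/-- NFG duality for pairwise models: `Z_d = q^{|E|} · Z_p`. -/
theorem nfg_duality {V E : Type*} [Fintype V] [Fintype E] [DecidableEq V] [DecidableEq E]
    (s t : E → V) (q : ℕ) [NeZero q]
    (ψ : E → ZMod q → ℂ) (φ : V → ZMod q → ℂ) :
    (∑ yt : E → ZMod q,
        (∏ e : E, dft q (ψ e) (yt e)) * ∏ v : V, dft q (φ v) (dualX s t q yt v)) =
      (q : ℂ) ^ Fintype.card E *
        ∑ x : V → ZMod q, (∏ e : E, ψ e (x (s e) - x (t e))) * ∏ v : V, φ v (x v) := by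
  simp only [prod_dft_mul_prod_dft_dualX]
  calc _ = ∑ a : E → ZMod q, ∑ x : V → ZMod q, ((∏ e, ψ e (a e)) * ∏ v, φ v (x v)) *
          ∑ yt : E → ZMod q, ZMod.stdAddChar (∑ e, yt e * (edgeVar s t x - a) e) := by
        simp only [mul_sum]
        rw [sum_comm]
        exact sum_congr rfl fun _ _ => sum_comm
    _ = ∑ x : V → ZMod q, ∑ a : E → ZMod q, if edgeVar s t x = a then
          ((∏ e, ψ e (a e)) * ∏ v, φ v (x v)) * (q : ℂ) ^ Fintype.card E else 0 := by
        simp only [sum_stdAddChar_sum_mul, sub_eq_zero, mul_ite, mul_zero]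
        exact sum_comm
    _ = _ := by
        simp only [sum_ite_eq, mem_univ, if_true, mul_sum, edgeVar]
        exact sum_congr rfl fun _ _ => mul_comm _ _
end

section
/- Primal edge-marginal bound for the ferromagnetic Ising model (Proposition 3, first part): in the Ising model of the context with J(e) ≥ 0 for all e and H(v) ≥ 0 for all v, for every edge e₀ the primal edge marginal satisfies π_p(e₀) := (Σ_{x : x(s e₀) = x(t e₀)} w(x)) / (Σ_x w(x)) ≥ 1/(1 + exp(−2·J(e₀))). -/
open scoped BigOperators

/-- The weight of an Ising configuration `x : V → ZMod 2`:
`w(x) = Π_e exp(J e · ε_e(x)) · Π_v exp(H v · η_v(x))`. -/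
noncomputable def isingWeight {V E : Type*} [Fintype V] [Fintype E]
    (s t : E → V) (J : E → ℝ) (H : V → ℝ) (x : V → ZMod 2) : ℝ :=
  (∏ e : E, Real.exp (J e * (if x (s e) = x (t e) then 1 else -1))) *
    ∏ v : V, Real.exp (H v * (if x v = 0 then 1 else -1))


namespace IsingAux

lemma zmod_cases : ∀ a : ZMod 2, a = 0 ∨ a = 1 := by decide

noncomputable def chi (a : ZMod 2) : ℝ := if a = 0 then 1 else -1

lemma chi_zero : chi 0 = 1 := by simp [chi]

lemma chi_add (a b : ZMod 2) : chi (a + b) = chi a * chi b := by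
  rcases zmod_cases a with h | h <;> rcases zmod_cases b with h' | h' <;>
    subst h <;> subst h' <;> norm_num [chi] <;> decide

lemma chi_eq_ite (a b : ZMod 2) : chi (a + b) = if a = b then 1 else -1 := by
  rcases zmod_cases a with h | h <;> rcases zmod_cases b with h' | h' <;>
    subst h <;> subst h' <;> norm_num [chi] <;> decide

lemma chi_sum {ι : Type*} (s : Finset ι) (f : ι → ZMod 2) :
    chi (∑ i ∈ s, f i) = ∏ i ∈ s, chi (f i) := by
  induction s using Finset.cons_induction with
  | empty => simp [chi]
  | cons a s ha ih => rw [Finset.sum_cons, Finset.prod_cons, chi_add, ih]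

lemma exp_mul_chi (K : ℝ) (a : ZMod 2) :
    Real.exp (K * chi a) = Real.cosh K + chi a * Real.sinh K := by
  rcases zmod_cases a with h | h <;> subst h
  · norm_num [chi, Real.cosh_add_sinh]
  · have := Real.cosh_sub_sinh K
    norm_num [chi]
    linarith

lemma sum_chi_nonneg {V : Type*} [Fintype V] [DecidableEq V] (c : V → ZMod 2) :
    0 ≤ ∑ x : V → ZMod 2, chi (∑ v, c v * x v) := by
  have h1 : ∀ x : V → ZMod 2, chi (∑ v, c v * x v) = ∏ v, chi (c v * x v) :=
    fun x => chi_sum _ _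
  simp_rw [h1]
  have h2 := Finset.prod_univ_sum (fun _ : V => (Finset.univ : Finset (ZMod 2)))
    (fun v a => chi (c v * a))
  rw [Fintype.piFinset_univ] at h2
  rw [← h2]
  apply Finset.prod_nonneg
  intro v _
  rw [show (Finset.univ : Finset (ZMod 2)) = {0, 1} by decide]
  rw [Finset.sum_insert (by decide), Finset.sum_singleton]
  rcases zmod_cases (c v) with h | h <;> rw [h] <;> norm_num [chi]

end IsingAux

namespace IsingAux

lemma gks {V I : Type*} [Fintype V] [DecidableEq V] [Fintype I]
    (K : I → ℝ) (hK : ∀ i, 0 ≤ K i) (p : I → V → ZMod 2) (c₀ : V → ZMod 2) :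
    0 ≤ ∑ x : V → ZMod 2, chi (∑ v, c₀ v * x v) *
        ∏ i, Real.exp (K i * chi (∑ v, p i v * x v)) := by
  classical
  have hexp : ∀ x : V → ZMod 2,
      chi (∑ v, c₀ v * x v) * ∏ i, Real.exp (K i * chi (∑ v, p i v * x v))
      = ∑ S ∈ (Finset.univ : Finset I).powerset,
          chi (∑ v, (c₀ v + ∑ i ∈ S, p i v) * x v) *
            ((∏ i ∈ S, Real.sinh (K i)) * ∏ i ∈ Finset.univ \ S, Real.cosh (K i)) := by
    intro x
    have h1 : ∀ i : I, Real.exp (K i * chi (∑ v, p i v * x v))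
        = chi (∑ v, p i v * x v) * Real.sinh (K i) + Real.cosh (K i) := by
      intro i; rw [exp_mul_chi]; ring
    simp_rw [h1]
    rw [Finset.prod_add, Finset.mul_sum]
    refine Finset.sum_congr rfl fun S _ => ?_
    have h2 : ∏ i ∈ S, (chi (∑ v, p i v * x v) * Real.sinh (K i))
        = chi (∑ i ∈ S, ∑ v, p i v * x v) * ∏ i ∈ S, Real.sinh (K i) := by
      rw [Finset.prod_mul_distrib, chi_sum]
    have h3 : (∑ i ∈ S, ∑ v, p i v * x v) = ∑ v, (∑ i ∈ S, p i v) * x v := by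
      rw [Finset.sum_comm]
      exact Finset.sum_congr rfl fun v _ => (Finset.sum_mul _ _ _).symm
    have h4 : chi (∑ v, (c₀ v + ∑ i ∈ S, p i v) * x v)
        = chi (∑ v, c₀ v * x v) * chi (∑ v, (∑ i ∈ S, p i v) * x v) := by
      rw [← chi_add, ← Finset.sum_add_distrib]
      congr 1
      exact Finset.sum_congr rfl fun v _ => add_mul _ _ _
    rw [h2, h3, h4]; ring
  simp_rw [hexp]
  rw [Finset.sum_comm]
  apply Finset.sum_nonneg
  intro S _
  rw [← Finset.sum_mul]
  apply mul_nonneg (sum_chi_nonneg _)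
  apply mul_nonneg
  · exact Finset.prod_nonneg fun i _ => Real.sinh_nonneg_iff.mpr (hK i)
  · exact Finset.prod_nonneg fun i _ => (Real.cosh_pos _).le

end IsingAux

namespace IsingAux

variable {V E : Type*} [Fintype V] [Fintype E] [DecidableEq V]

def delta (u : V) : V → ZMod 2 := fun v => if v = u then 1 else 0

lemma dot_delta (u : V) (x : V → ZMod 2) : ∑ v, delta u v * x v = x u := by
  simp [delta, ite_mul, Finset.sum_ite_eq']

lemma gks_ising (s t : E → V) (J : E → ℝ) (H : V → ℝ)
    (hJ : ∀ e, 0 ≤ J e) (hH : ∀ v, 0 ≤ H v) (a b : V) :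
    0 ≤ ∑ x : V → ZMod 2,
      (if x a = x b then (1:ℝ) else -1) * isingWeight s t J H x := by
  classical
  have key := gks (V := V) (I := E ⊕ V) (Sum.elim J H) (by rintro (e | v); exacts [hJ e, hH v])
    (Sum.elim (fun e v => delta (s e) v + delta (t e) v) (fun u => delta u))
    (fun v => delta a v + delta b v)
  have hsum : ∀ (u w : V) (x : V → ZMod 2),
      (∑ v, (delta u v + delta w v) * x v) = x u + x w := by
    intro u w x
    simp_rw [add_mul, Finset.sum_add_distrib, dot_delta]
  refine key.trans_eq (Finset.sum_congr rfl fun x _ => ?_)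
  rw [Fintype.prod_sum_type]
  simp only [Sum.elim_inl, Sum.elim_inr]
  unfold isingWeight
  congr 1
  · rw [hsum a b x, chi_eq_ite]
  · congr 1
    · refine Finset.prod_congr rfl fun e _ => ?_
      rw [hsum (s e) (t e) x, chi_eq_ite]
    · refine Finset.prod_congr rfl fun v _ => ?_
      rw [dot_delta, chi]

end IsingAux

open IsingAux in
/-- Proposition 3 (first part): in a ferromagnetic Ising model in a nonnegative external
field, the primal edge marginal satisfies `π_p(e₀) ≥ 1/(1 + exp(−2 J e₀))`. -/
theorem ising_primal_edge_marginal_bound {V E : Type*} [Fintype V] [Fintype E] [DecidableEq V]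
    (s t : E → V) (J : E → ℝ) (H : V → ℝ)
    (hJ : ∀ e, 0 ≤ J e) (hH : ∀ v, 0 ≤ H v) (e₀ : E) :
    1 / (1 + Real.exp (-2 * J e₀)) ≤
      (∑ x ∈ Finset.univ.filter (fun x : V → ZMod 2 => x (s e₀) = x (t e₀)),
          isingWeight s t J H x) /
        ∑ x : V → ZMod 2, isingWeight s t J H x := by
  classical
  set J' : E → ℝ := fun e => if e = e₀ then 0 else J e with hJ'
  have hJ'nonneg : ∀ e, 0 ≤ J' e := by
    intro e; by_cases h : e = e₀ <;> simp [hJ', h, hJ e]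
  have hfac : ∀ x : V → ZMod 2, isingWeight s t J H x
      = Real.exp (J e₀ * (if x (s e₀) = x (t e₀) then (1:ℝ) else -1)) *
        isingWeight s t J' H x := by
    intro x
    unfold isingWeight
    rw [← mul_assoc]
    congr 1
    rw [← Finset.mul_prod_erase Finset.univ
        (fun e => Real.exp (J e * (if x (s e) = x (t e) then (1:ℝ) else -1)))
        (Finset.mem_univ e₀),
      ← Finset.mul_prod_erase Finset.univ
        (fun e => Real.exp (J' e * (if x (s e) = x (t e) then (1:ℝ) else -1)))
        (Finset.mem_univ e₀)]
    simp only [hJ', if_pos rfl, zero_mul, Real.exp_zero, one_mul, ← mul_assoc]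
    congr 1
    refine Finset.prod_congr rfl fun e he => ?_
    rw [if_neg (Finset.ne_of_mem_erase he)]
  set A := ∑ x ∈ Finset.univ.filter (fun x : V → ZMod 2 => x (s e₀) = x (t e₀)),
      isingWeight s t J' H x with hA
  set D := ∑ x ∈ Finset.univ.filter (fun x : V → ZMod 2 => ¬ x (s e₀) = x (t e₀)),
      isingWeight s t J' H x with hD
  have hw'pos : ∀ x : V → ZMod 2, 0 < isingWeight s t J' H x := by
    intro x
    exact mul_pos (Finset.prod_pos fun _ _ => Real.exp_pos _)
      (Finset.prod_pos fun _ _ => Real.exp_pos _)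
  have hApos : 0 < A := by
    refine Finset.sum_pos (fun x _ => hw'pos x) ⟨fun _ => 0, ?_⟩
    simp
  have hDnonneg : 0 ≤ D := Finset.sum_nonneg fun x _ => (hw'pos x).le
  have hDA : D ≤ A := by
    have hgks := gks_ising s t J' H hJ'nonneg hH (s e₀) (t e₀)
    rw [← Finset.sum_filter_add_sum_filter_not Finset.univ
      (fun x : V → ZMod 2 => x (s e₀) = x (t e₀))] at hgks
    have h1 : ∑ x ∈ Finset.univ.filter (fun x : V → ZMod 2 => x (s e₀) = x (t e₀)),
        (if x (s e₀) = x (t e₀) then (1:ℝ) else -1) * isingWeight s t J' H x = A := by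
      refine Finset.sum_congr rfl fun x hx => ?_
      rw [if_pos (Finset.mem_filter.mp hx).2, one_mul]
    have h2 : ∑ x ∈ Finset.univ.filter (fun x : V → ZMod 2 => ¬ x (s e₀) = x (t e₀)),
        (if x (s e₀) = x (t e₀) then (1:ℝ) else -1) * isingWeight s t J' H x = -D := by
      rw [hD, ← Finset.sum_neg_distrib]
      refine Finset.sum_congr rfl fun x hx => ?_
      rw [if_neg (Finset.mem_filter.mp hx).2]; ring
    rw [h1, h2] at hgks
    linarith
  have hAgree : ∑ x ∈ Finset.univ.filter (fun x : V → ZMod 2 => x (s e₀) = x (t e₀)),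
      isingWeight s t J H x = Real.exp (J e₀) * A := by
    rw [hA, Finset.mul_sum]
    refine Finset.sum_congr rfl fun x hx => ?_
    rw [hfac x, if_pos (Finset.mem_filter.mp hx).2, mul_one]
  have hDis : ∑ x ∈ Finset.univ.filter (fun x : V → ZMod 2 => ¬ x (s e₀) = x (t e₀)),
      isingWeight s t J H x = Real.exp (-J e₀) * D := by
    rw [hD, Finset.mul_sum]
    refine Finset.sum_congr rfl fun x hx => ?_
    rw [hfac x, if_neg (Finset.mem_filter.mp hx).2]
    norm_num
  have hTot : ∑ x : V → ZMod 2, isingWeight s t J H x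
      = Real.exp (J e₀) * A + Real.exp (-J e₀) * D := by
    rw [← Finset.sum_filter_add_sum_filter_not Finset.univ
      (fun x : V → ZMod 2 => x (s e₀) = x (t e₀)), hAgree, hDis]
  rw [hAgree, hTot]
  have hd1 : (0:ℝ) < 1 + Real.exp (-2 * J e₀) := by positivity
  have hd2 : (0:ℝ) < Real.exp (J e₀) * A + Real.exp (-J e₀) * D := by
    have := Real.exp_pos (J e₀)
    have := Real.exp_pos (-J e₀)
    nlinarith
  rw [div_le_div_iff₀ hd1 hd2]
  have hmul : Real.exp (J e₀) * Real.exp (-2 * J e₀) = Real.exp (-J e₀) := by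
    rw [← Real.exp_add]; ring_nf
  have h3 : 0 ≤ Real.exp (-J e₀) * (A - D) :=
    mul_nonneg (Real.exp_pos _).le (by linarith)
  nlinarith [Real.exp_pos (J e₀), Real.exp_pos (-J e₀)]
end

section
/- Dual edge-marginal bound for the ferromagnetic Ising model (Proposition 3, second part): in the dual Ising model of the context with J(e) ≥ 0 for all e and H(v) ≥ 0 for all v, for every edge e₀ the dual edge marginal satisfies π_d(e₀) := (Σ_{ỹ : ỹ(e₀) = 0} W(ỹ)) / (Σ_ỹ W(ỹ)) ≥ (1 + exp(−2·J(e₀)))/2. -/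
open scoped BigOperators

/-- The dual vertex variable `x̃_v(yt) = Σ_{e : s e = v} yt e + Σ_{e : t e = v} yt e` in `ZMod 2`. -/
noncomputable def dualX2 {V E : Type*} [Fintype E] [DecidableEq V]
    (s t : E → V) (yt : E → ZMod 2) (v : V) : ZMod 2 :=
  (∑ e ∈ Finset.univ.filter (fun e => s e = v), yt e) +
    ∑ e ∈ Finset.univ.filter (fun e => t e = v), yt e

/-- The weight of a dual Ising configuration `yt : E → ZMod 2`:
`W(yt) = Π_e c_e(yt e) · Π_v d_v(x̃_v(yt))` with `c_e(0) = cosh(J e)`, `c_e(1) = sinh(J e)`,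
`d_v(0) = cosh(H v)`, `d_v(1) = sinh(H v)`. -/
noncomputable def dualIsingWeight {V E : Type*} [Fintype V] [Fintype E] [DecidableEq V]
    (s t : E → V) (J : E → ℝ) (H : V → ℝ) (yt : E → ZMod 2) : ℝ :=
  (∏ e : E, if yt e = 0 then Real.cosh (J e) else Real.sinh (J e)) *
    ∏ v : V, if dualX2 s t yt v = 0 then Real.cosh (H v) else Real.sinh (H v)

open Finset Real

noncomputable def eps (z : ZMod 2) : ℝ := if z = 0 then 1 else -1

lemma zmod2_cases (a : ZMod 2) : a = 0 ∨ a = 1 := by revert a; decide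

lemma eps_zero : eps 0 = 1 := by simp [eps]

lemma eps_add (a b : ZMod 2) : eps (a + b) = eps a * eps b := by
  have h11 : (1 + 1 : ZMod 2) = 0 := by decide
  have h10 : (1 : ZMod 2) ≠ 0 := by decide
  rcases zmod2_cases a with h | h <;> rcases zmod2_cases b with h' | h' <;>
    subst h <;> subst h' <;> simp [eps, h11, h10]

lemma sum_zmod2 (g : ZMod 2 → ℝ) : ∑ y : ZMod 2, g y = g 0 + g 1 := by
  rw [show (univ : Finset (ZMod 2)) = {0, 1} from by decide]
  rw [Finset.sum_insert (by decide), Finset.sum_singleton]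

lemma eps_sum_mul {ι : Type*} [DecidableEq ι] (S : Finset ι) (g : ι → ZMod 2) (c : ZMod 2) :
    eps ((∑ i ∈ S, g i) * c) = ∏ i ∈ S, eps (g i * c) := by
  induction S using Finset.induction_on with
  | empty => simp [eps]
  | insert a S' h ih =>
    rw [Finset.sum_insert h, Finset.prod_insert h, add_mul, eps_add, ih]

lemma sum_eps_mul (c : ZMod 2) : ∑ a : ZMod 2, eps (c * a) = if c = 0 then 2 else 0 := by
  rw [sum_zmod2]
  rcases zmod2_cases c with h | h <;> subst h <;>
    norm_num [eps, show (1 : ZMod 2) ≠ 0 from by decide]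


lemma zmod2_add_eq_zero (a b : ZMod 2) : a + b = 0 ↔ b = a := by revert a b; decide

lemma key {V E : Type*} [Fintype V] [Fintype E] [DecidableEq V] [DecidableEq E]
    (s t : E → V) (f : E → ZMod 2 → ℝ) (d : V → ZMod 2 → ℝ) :
    (∑ σ : V → ZMod 2,
        (∏ e, (f e 0 + f e 1 * eps (σ (s e) + σ (t e)))) *
          ∏ v, (d v 0 + d v 1 * eps (σ v)))
      = (2:ℝ) ^ (Fintype.card V) *
        ∑ yt : E → ZMod 2, (∏ e, f e (yt e)) * ∏ v, d v (dualX2 s t yt v) := by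
  calc
    (∑ σ : V → ZMod 2,
        (∏ e, (f e 0 + f e 1 * eps (σ (s e) + σ (t e)))) *
          ∏ v, (d v 0 + d v 1 * eps (σ v)))
      = ∑ σ : V → ZMod 2,
          (∑ yt : E → ZMod 2, ∏ e, f e (yt e) * eps (yt e * (σ (s e) + σ (t e)))) *
          (∑ z : V → ZMod 2, ∏ v, d v (z v) * eps (z v * σ v)) := by
        refine Finset.sum_congr rfl fun σ _ => ?_
        rw [← Fintype.prod_sum (fun e y => f e y * eps (y * (σ (s e) + σ (t e)))),
          ← Fintype.prod_sum (fun v z => d v z * eps (z * σ v))]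
        congr 1
        · exact Finset.prod_congr rfl fun e _ => by
            rw [sum_zmod2]; simp [eps_zero]
        · exact Finset.prod_congr rfl fun v _ => by
            rw [sum_zmod2]; simp [eps_zero]
    _ = ∑ yt : E → ZMod 2, ∑ z : V → ZMod 2, ∑ σ : V → ZMod 2,
          (∏ e, f e (yt e) * eps (yt e * (σ (s e) + σ (t e)))) *
          (∏ v, d v (z v) * eps (z v * σ v)) := by
        simp_rw [Finset.sum_mul_sum]
        rw [Finset.sum_comm]
        exact Finset.sum_congr rfl fun yt _ => Finset.sum_comm
    _ = ∑ yt : E → ZMod 2, ∑ z : V → ZMod 2,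
          ((∏ e, f e (yt e)) * ∏ v, d v (z v)) *
          ∑ σ : V → ZMod 2, ∏ v, eps ((dualX2 s t yt v + z v) * σ v) := by
        refine Finset.sum_congr rfl fun yt _ => Finset.sum_congr rfl fun z _ => ?_
        rw [Finset.mul_sum]
        refine Finset.sum_congr rfl fun σ _ => ?_
        rw [Finset.prod_mul_distrib, Finset.prod_mul_distrib]
        have h1 : ∀ e, eps (yt e * (σ (s e) + σ (t e)))
            = eps (yt e * σ (s e)) * eps (yt e * σ (t e)) := fun e => by
          rw [mul_add, eps_add]
        have hE : (∏ e, eps (yt e * (σ (s e) + σ (t e)))) * (∏ v, eps (z v * σ v))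
            = ∏ v, eps ((dualX2 s t yt v + z v) * σ v) := by
          simp_rw [h1]
          rw [Finset.prod_mul_distrib]
          have hs : (∏ e, eps (yt e * σ (s e)))
              = ∏ v, eps ((∑ e ∈ Finset.univ.filter (fun e => s e = v), yt e) * σ v) := by
            rw [← Finset.prod_fiberwise Finset.univ s (fun e => eps (yt e * σ (s e)))]
            refine Finset.prod_congr rfl fun v _ => ?_
            rw [eps_sum_mul]
            exact Finset.prod_congr rfl fun e he => by rw [(Finset.mem_filter.1 he).2]
          have ht : (∏ e, eps (yt e * σ (t e)))
              = ∏ v, eps ((∑ e ∈ Finset.univ.filter (fun e => t e = v), yt e) * σ v) := by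
            rw [← Finset.prod_fiberwise Finset.univ t (fun e => eps (yt e * σ (t e)))]
            refine Finset.prod_congr rfl fun v _ => ?_
            rw [eps_sum_mul]
            exact Finset.prod_congr rfl fun e he => by rw [(Finset.mem_filter.1 he).2]
          rw [hs, ht, ← Finset.prod_mul_distrib, ← Finset.prod_mul_distrib]
          refine Finset.prod_congr rfl fun v _ => ?_
          rw [dualX2, add_mul, add_mul, eps_add, eps_add]
        rw [mul_mul_mul_comm, hE]
    _ = ∑ yt : E → ZMod 2, ∑ z : V → ZMod 2,
          ((∏ e, f e (yt e)) * ∏ v, d v (z v)) *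
          (if z = (fun v => dualX2 s t yt v) then (2:ℝ) ^ (Fintype.card V) else 0) := by
        refine Finset.sum_congr rfl fun yt _ => Finset.sum_congr rfl fun z _ => ?_
        congr 1
        rw [← Fintype.prod_sum (fun v a => eps ((dualX2 s t yt v + z v) * a))]
        simp_rw [sum_eps_mul, zmod2_add_eq_zero]
        by_cases hz : z = fun v => dualX2 s t yt v
        · rw [if_pos hz]
          have : ∀ v, z v = dualX2 s t yt v := fun v => by rw [hz]
          simp only [this, if_true]
          rw [Finset.prod_const, Finset.card_univ]
        · rw [if_neg hz]
          obtain ⟨v, hv⟩ : ∃ v, ¬ z v = dualX2 s t yt v := by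
            by_contra h
            push_neg at h
            exact hz (funext h)
          exact Finset.prod_eq_zero (Finset.mem_univ v) (if_neg hv)
    _ = (2:ℝ) ^ (Fintype.card V) *
        ∑ yt : E → ZMod 2, (∏ e, f e (yt e)) * ∏ v, d v (dualX2 s t yt v) := by
        rw [Finset.mul_sum]
        refine Finset.sum_congr rfl fun yt _ => ?_
        simp only [mul_ite, mul_zero, Finset.sum_ite_eq', Finset.mem_univ, if_true]
        ring

lemma eps_cases (z : ZMod 2) : eps z = 1 ∨ eps z = -1 := by
  rcases zmod2_cases z with h | h <;> subst h <;> simp [eps, show (1 : ZMod 2) ≠ 0 from by decide]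

lemma factor_pos (x : ℝ) (z : ZMod 2) : 0 < Real.cosh x + Real.sinh x * eps z := by
  rcases eps_cases z with h | h <;> rw [h]
  · rw [mul_one, Real.cosh_add_sinh]; exact Real.exp_pos x
  · rw [mul_neg_one, ← sub_eq_add_neg, Real.cosh_sub_sinh]; exact Real.exp_pos (-x)

lemma factor_le (x : ℝ) (hx : 0 ≤ x) (z : ZMod 2) :
    Real.cosh x + Real.sinh x * eps z ≤ Real.exp x := by
  rcases eps_cases z with h | h <;> rw [h]
  · rw [mul_one, Real.cosh_add_sinh]
  · rw [mul_neg_one, ← sub_eq_add_neg, Real.cosh_sub_sinh]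
    exact Real.exp_le_exp.2 (by linarith)

/-- Proposition 3 (second part): in the dual of a ferromagnetic Ising model in a nonnegative
external field, the dual edge marginal satisfies `π_d(e₀) ≥ (1 + exp(−2 J e₀))/2`. -/
theorem ising_dual_edge_marginal_bound {V E : Type*} [Fintype V] [Fintype E]
    [DecidableEq V] [DecidableEq E]
    (s t : E → V) (J : E → ℝ) (H : V → ℝ)
    (hJ : ∀ e, 0 ≤ J e) (hH : ∀ v, 0 ≤ H v) (e₀ : E) :
    (1 + Real.exp (-2 * J e₀)) / 2 ≤
      (∑ yt ∈ Finset.univ.filter (fun yt : E → ZMod 2 => yt e₀ = 0),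
          dualIsingWeight s t J H yt) /
        ∑ yt : E → ZMod 2, dualIsingWeight s t J H yt := by
  classical
  set c : E → ZMod 2 → ℝ := fun e y => if y = 0 then Real.cosh (J e) else Real.sinh (J e) with hc
  set f0 : E → ZMod 2 → ℝ :=
    fun e y => if e = e₀ then (if y = 0 then Real.cosh (J e₀) else 0) else c e y with hf0
  set d : V → ZMod 2 → ℝ := fun v z => if z = 0 then Real.cosh (H v) else Real.sinh (H v) with hd
  set A : ℝ := ∑ yt ∈ Finset.univ.filter (fun yt : E → ZMod 2 => yt e₀ = 0),
      dualIsingWeight s t J H yt with hA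
  set Z : ℝ := ∑ yt : E → ZMod 2, dualIsingWeight s t J H yt with hZdef
  -- rewrite A and Z in the form of `key`
  have hZ' : Z = ∑ yt : E → ZMod 2, (∏ e, c e (yt e)) * ∏ v, d v (dualX2 s t yt v) := rfl
  have hA' : A = ∑ yt : E → ZMod 2, (∏ e, f0 e (yt e)) * ∏ v, d v (dualX2 s t yt v) := by
    rw [hA, Finset.sum_filter]
    refine Finset.sum_congr rfl fun yt _ => ?_
    by_cases h : yt e₀ = 0
    · rw [if_pos h]
      show (∏ e : E, c e (yt e)) * _ = _
      congr 1
      refine Finset.prod_congr rfl fun e _ => ?_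
      by_cases he : e = e₀
      · subst he; simp [hf0, hc, h]
      · simp [hf0, he]
    · rw [if_neg h]
      refine (eq_comm.1 ?_)
      apply mul_eq_zero_of_left
      refine Finset.prod_eq_zero (Finset.mem_univ e₀) ?_
      simp [hf0, h]
  have hkeyZ := key s t c d
  have hkeyA := key s t f0 d
  rw [← hZ'] at hkeyZ
  rw [← hA'] at hkeyA
  -- per-σ analysis
  set D : (V → ZMod 2) → ℝ := fun σ => ∏ v, (d v 0 + d v 1 * eps (σ v)) with hD
  have hDpos : ∀ σ, 0 < D σ :=
    fun σ => Finset.prod_pos fun v _ => by simpa [hd] using factor_pos (H v) (σ v)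
  have hGpos : ∀ (e : E) (σ : V → ZMod 2), (0:ℝ) < c e 0 + c e 1 * eps (σ (s e) + σ (t e)) :=
    fun e σ => by simpa [hc] using factor_pos (J e) _
  have hP0 : ∀ σ : V → ZMod 2,
      (∏ e, (f0 e 0 + f0 e 1 * eps (σ (s e) + σ (t e)))) =
        Real.cosh (J e₀) * ∏ e ∈ Finset.univ.erase e₀, (c e 0 + c e 1 * eps (σ (s e) + σ (t e))) := by
    intro σ
    rw [← Finset.mul_prod_erase Finset.univ _ (Finset.mem_univ e₀)]
    congr 1
    · simp [hf0]
    · refine Finset.prod_congr rfl fun e he => ?_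
      have : e ≠ e₀ := (Finset.mem_erase.1 he).1
      simp [hf0, this]
  have hP : ∀ σ : V → ZMod 2,
      (∏ e, (c e 0 + c e 1 * eps (σ (s e) + σ (t e)))) =
        (c e₀ 0 + c e₀ 1 * eps (σ (s e₀) + σ (t e₀))) *
          ∏ e ∈ Finset.univ.erase e₀, (c e 0 + c e 1 * eps (σ (s e) + σ (t e))) :=
    fun σ => (Finset.mul_prod_erase Finset.univ _ (Finset.mem_univ e₀)).symm
  have hcosh_pos : (0:ℝ) < Real.cosh (J e₀) := Real.cosh_pos _
  set k : ℝ := Real.exp (J e₀) / Real.cosh (J e₀) with hk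
  have hkpos : 0 < k := div_pos (Real.exp_pos _) hcosh_pos
  -- Z ≤ k * A, at the level of 2^card-scaled sums
  have hterm : ∀ σ : V → ZMod 2,
      (∏ e, (c e 0 + c e 1 * eps (σ (s e) + σ (t e)))) * D σ ≤
      k * ((∏ e, (f0 e 0 + f0 e 1 * eps (σ (s e) + σ (t e)))) * D σ) := by
    intro σ
    rw [hP σ, hP0 σ]
    have hR : (0:ℝ) ≤ ∏ e ∈ Finset.univ.erase e₀, (c e 0 + c e 1 * eps (σ (s e) + σ (t e))) :=
      Finset.prod_nonneg fun e _ => (hGpos e σ).le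
    have h1 : c e₀ 0 + c e₀ 1 * eps (σ (s e₀) + σ (t e₀)) ≤ Real.exp (J e₀) := by
      simpa [hc] using factor_le (J e₀) (hJ e₀) _
    have h2 : k * (Real.cosh (J e₀) * (∏ e ∈ Finset.univ.erase e₀,
        (c e 0 + c e 1 * eps (σ (s e) + σ (t e)))) * D σ) =
        Real.exp (J e₀) * ((∏ e ∈ Finset.univ.erase e₀,
        (c e 0 + c e 1 * eps (σ (s e) + σ (t e)))) * D σ) := by
      field_simp [hk]
      rw [hk, div_mul_cancel₀ _ hcosh_pos.ne']
      ring
    calc (c e₀ 0 + c e₀ 1 * eps (σ (s e₀) + σ (t e₀))) *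
          (∏ e ∈ Finset.univ.erase e₀, (c e 0 + c e 1 * eps (σ (s e) + σ (t e)))) * D σ
        ≤ Real.exp (J e₀) * ((∏ e ∈ Finset.univ.erase e₀,
            (c e 0 + c e 1 * eps (σ (s e) + σ (t e)))) * D σ) := by
          rw [mul_assoc]
          exact mul_le_mul_of_nonneg_right h1 (mul_nonneg hR (hDpos σ).le)
      _ = k * (Real.cosh (J e₀) * (∏ e ∈ Finset.univ.erase e₀,
            (c e 0 + c e 1 * eps (σ (s e) + σ (t e)))) * D σ) := h2.symm
  have h2c : (0:ℝ) < 2 ^ Fintype.card V := by positivity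
  have hsum : (2:ℝ) ^ Fintype.card V * Z ≤ k * ((2:ℝ) ^ Fintype.card V * A) := by
    rw [← hkeyZ, ← hkeyA, Finset.mul_sum]
    exact Finset.sum_le_sum fun σ _ => hterm σ
  have hZA : Z ≤ k * A := by
    have h' : (2:ℝ) ^ Fintype.card V * Z ≤ (2:ℝ) ^ Fintype.card V * (k * A) := by
      calc (2:ℝ) ^ Fintype.card V * Z ≤ k * ((2:ℝ) ^ Fintype.card V * A) := hsum
        _ = (2:ℝ) ^ Fintype.card V * (k * A) := by ring
    exact le_of_mul_le_mul_left h' h2c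
  have hZpos : 0 < Z := by
    have hpos : (0:ℝ) < 2 ^ Fintype.card V * Z := by
      rw [← hkeyZ]
      exact Finset.sum_pos
        (fun σ _ => mul_pos (Finset.prod_pos fun e _ => hGpos e σ) (hDpos σ))
        Finset.univ_nonempty
    nlinarith
  have he : Real.exp (-2 * J e₀) * Real.exp (J e₀) = Real.exp (-(J e₀)) := by
    rw [← Real.exp_add]; ring_nf
  have hfin : (1 + Real.exp (-2 * J e₀)) / 2 = 1 / k := by
    rw [hk, one_div_div, Real.cosh_eq]
    rw [div_div, div_eq_div_iff (by norm_num) (by positivity)]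
    linear_combination 2 * he
  rw [hfin, div_le_div_iff₀ hkpos hZpos]
  calc 1 * Z = Z := one_mul Z
    _ ≤ k * A := hZA
    _ = A * k := mul_comm k A
end

section
/- Primal edge-marginal bound for the ferromagnetic Potts model (Proposition 5, first part): in the q-state Potts model of the context with J(e) ≥ 0 for all e and H(v) ≥ 0 for all v, for every edge e₀ the primal edge marginal satisfies π_p(e₀) := (Σ_{x : x(s e₀) = x(t e₀)} w(x)) / (Σ_x w(x)) ≥ e^{J(e₀)} / (e^{J(e₀)} − 1 + q). -/
open scoped BigOperators

/-- The weight of a q-state Potts configuration `x : V → ZMod q`: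
`w(x) = Π_e exp(J e·[x(s e) = x(t e)]) · Π_v exp(H v·[x v = 0])`. -/
noncomputable def pottsWeight {V E : Type*} [Fintype V] [Fintype E]
    (s t : E → V) (q : ℕ) (J : E → ℝ) (H : V → ℝ) (x : V → ZMod q) : ℝ :=
  (∏ e : E, Real.exp (J e * (if x (s e) = x (t e) then 1 else 0))) *
    ∏ v : V, Real.exp (H v * (if x v = 0 then 1 else 0))

section PottsAux

variable {V E : Type*} [Fintype V] [Fintype E]

private lemma pottsWeight_pos (s t : E → V) (q : ℕ) (J : E → ℝ) (H : V → ℝ)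
    (x : V → ZMod q) : 0 < pottsWeight s t q J H x :=
  mul_pos (Finset.prod_pos fun _ _ => Real.exp_pos _)
    (Finset.prod_pos fun _ _ => Real.exp_pos _)

/-- The graph on `V` whose edges are the pairs `{s e, t e}` for `e ∈ S`. -/
private def pottsGraph (s t : E → V) (S : Finset E) : SimpleGraph V :=
  SimpleGraph.fromRel fun a b => ∃ e ∈ S, s e = a ∧ t e = b

private lemma pottsGraph_adj (s t : E → V) (S : Finset E) (a b : V) :
    (pottsGraph s t S).Adj a b ↔
      a ≠ b ∧ ((∃ e ∈ S, s e = a ∧ t e = b) ∨ ∃ e ∈ S, s e = b ∧ t e = a) :=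
  SimpleGraph.fromRel_adj _ _ _

/-- A configuration compatible with `S` is constant on connected components. -/
private lemma potts_reach_const (s t : E → V) {q : ℕ} (S : Finset E)
    {x : V → ZMod q} (hx : ∀ e ∈ S, x (s e) = x (t e)) {a b : V}
    (h : (pottsGraph s t S).Reachable a b) : x a = x b := by
  obtain ⟨p⟩ := h
  induction p with
  | nil => rfl
  | cons h' p ih =>
    refine Eq.trans ?_ ih
    rw [pottsGraph_adj] at h'
    obtain ⟨-, ⟨e, he, h1, h2⟩ | ⟨e, he, h1, h2⟩⟩ := h'
    · rw [← h1, ← h2]; exact hx e he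
    · rw [← h1, ← h2]; exact (hx e he).symm

/-- Counting inequality when the component of `v` contains no vertex of `T`
and does not contain `u`: shift the color of the component of `v`. -/
private lemma potts_count_free [DecidableEq V] (s t : E → V) (q : ℕ) [NeZero q]
    (S : Finset E) (T : Finset V) (u v : V)
    (huv : ¬ (pottsGraph s t S).Reachable u v)
    (hfree : ∀ z ∈ T, ¬ (pottsGraph s t S).Reachable z v) :
    (Finset.univ.filter fun x : V → ZMod q =>
        (∀ e ∈ S, x (s e) = x (t e)) ∧ ∀ w ∈ T, x w = 0).card ≤
    q * (Finset.univ.filter fun x : V → ZMod q =>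
        x u = x v ∧ ((∀ e ∈ S, x (s e) = x (t e)) ∧ ∀ w ∈ T, x w = 0)).card := by
  classical
  have hadj : ∀ e ∈ S, s e = t e ∨ (pottsGraph s t S).Adj (s e) (t e) := by
    intro e he
    by_cases h : s e = t e
    · exact Or.inl h
    · exact Or.inr ((pottsGraph_adj s t S _ _).mpr ⟨h, Or.inl ⟨e, he, rfl, rfl⟩⟩)
  have key : ∀ (c : ZMod q) (x : V → ZMod q),
      ((∀ e ∈ S, x (s e) = x (t e)) ∧ ∀ w ∈ T, x w = 0) →
      ((∀ e ∈ S,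
          (if (pottsGraph s t S).Reachable (s e) v then x (s e) + c else x (s e)) =
          (if (pottsGraph s t S).Reachable (t e) v then x (t e) + c else x (t e))) ∧
        ∀ w ∈ T, (if (pottsGraph s t S).Reachable w v then x w + c else x w) = 0) := by
    intro c x hx
    obtain ⟨h1, h2⟩ := hx
    constructor
    · intro e he
      rcases hadj e he with h | h
      · simp [h]
      · by_cases hr : (pottsGraph s t S).Reachable (s e) v
        · rw [if_pos hr, if_pos (h.symm.reachable.trans hr), h1 e he]
        · rw [if_neg hr, if_neg (fun hr' => hr (h.reachable.trans hr')), h1 e he]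
    · intro w hw
      rw [if_neg (hfree w hw), h2 w hw]
  have hmaps : ∀ x ∈ (Finset.univ.filter fun x : V → ZMod q =>
      (∀ e ∈ S, x (s e) = x (t e)) ∧ ∀ w ∈ T, x w = 0),
      ((fun w => if (pottsGraph s t S).Reachable w v then x w + (x u - x v) else x w,
        x v - x u) : (V → ZMod q) × ZMod q) ∈
      (Finset.univ.filter fun y : V → ZMod q =>
        y u = y v ∧ ((∀ e ∈ S, y (s e) = y (t e)) ∧ ∀ w ∈ T, y w = 0)) ×ˢ
        (Finset.univ : Finset (ZMod q)) := by
    intro x hx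
    rw [Finset.mem_filter] at hx
    refine Finset.mem_product.mpr ⟨Finset.mem_filter.mpr ⟨Finset.mem_univ _, ?_,
      key (x u - x v) x hx.2⟩, Finset.mem_univ _⟩
    show (if (pottsGraph s t S).Reachable u v then x u + (x u - x v) else x u) =
      (if (pottsGraph s t S).Reachable v v then x v + (x u - x v) else x v)
    rw [if_neg huv, if_pos (SimpleGraph.Reachable.refl v)]
    ring
  have hinj : Set.InjOn
      (fun x : V → ZMod q =>
        ((fun w => if (pottsGraph s t S).Reachable w v then x w + (x u - x v) else x w,
          x v - x u) : (V → ZMod q) × ZMod q))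
      (Finset.univ.filter fun x : V → ZMod q =>
        (∀ e ∈ S, x (s e) = x (t e)) ∧ ∀ w ∈ T, x w = 0) := by
    intro x₁ _ x₂ _ hfx
    have hsnd : x₁ v - x₁ u = x₂ v - x₂ u := congrArg Prod.snd hfx
    have hc : x₁ u - x₁ v = x₂ u - x₂ v := by
      have h := congrArg Neg.neg hsnd
      simpa [neg_sub] using h
    have hfst : (fun w => if (pottsGraph s t S).Reachable w v then x₁ w + (x₁ u - x₁ v)
        else x₁ w) = (fun w => if (pottsGraph s t S).Reachable w v then x₂ w + (x₂ u - x₂ v)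
        else x₂ w) := congrArg Prod.fst hfx
    funext w
    have hw := congrFun hfst w
    by_cases hr : (pottsGraph s t S).Reachable w v
    · rw [if_pos hr, if_pos hr, hc] at hw
      exact add_right_cancel hw
    · rwa [if_neg hr, if_neg hr] at hw
  have h := Finset.card_le_card_of_injOn _ hmaps hinj
  rw [Finset.card_product, Finset.card_univ, ZMod.card, mul_comm] at h
  refine le_trans (le_trans (Finset.card_le_card fun x hx => ?_) h)
    (Nat.mul_le_mul le_rfl (Finset.card_le_card fun x hx => ?_)) <;>
  · simp only [Finset.mem_filter] at hx ⊢
    exact hx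

/-- The key counting inequality. -/
private lemma potts_count [DecidableEq V] (s t : E → V) (q : ℕ) [NeZero q]
    (S : Finset E) (T : Finset V) (u v : V) :
    (Finset.univ.filter fun x : V → ZMod q =>
        (∀ e ∈ S, x (s e) = x (t e)) ∧ ∀ w ∈ T, x w = 0).card ≤
    q * (Finset.univ.filter fun x : V → ZMod q =>
        x u = x v ∧ ((∀ e ∈ S, x (s e) = x (t e)) ∧ ∀ w ∈ T, x w = 0)).card := by
  classical
  have hq1 : 1 ≤ q := NeZero.one_le
  by_cases huv : (pottsGraph s t S).Reachable u v
  · refine le_trans (Finset.card_le_card fun x hx => ?_)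
      (Nat.le_mul_of_pos_left _ (show 0 < q by omega))
    simp only [Finset.mem_filter] at hx ⊢
    exact ⟨hx.1, potts_reach_const s t S hx.2.1 huv, hx.2⟩
  by_cases hv : ∀ z ∈ T, ¬ (pottsGraph s t S).Reachable z v
  · exact potts_count_free s t q S T u v huv hv
  by_cases hu : ∀ z ∈ T, ¬ (pottsGraph s t S).Reachable z u
  · refine (potts_count_free s t q S T v u (fun h => huv h.symm) hu).trans
      (Nat.mul_le_mul le_rfl (Finset.card_le_card fun x hx => ?_))
    simp only [Finset.mem_filter] at hx ⊢
    exact ⟨hx.1, hx.2.1.symm, hx.2.2⟩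
  · push_neg at hv hu
    obtain ⟨z1, hz1, hr1⟩ := hv
    obtain ⟨z2, hz2, hr2⟩ := hu
    refine le_trans (Finset.card_le_card fun x hx => ?_)
      (Nat.le_mul_of_pos_left _ (show 0 < q by omega))
    simp only [Finset.mem_filter] at hx ⊢
    refine ⟨hx.1, ?_, hx.2⟩
    have h1 : x u = 0 := by
      rw [← potts_reach_const s t S hx.2.1 hr2]
      exact hx.2.2 z2 hz2
    have h2 : x v = 0 := by
      rw [← potts_reach_const s t S hx.2.1 hr1]
      exact hx.2.2 z1 hz1
    rw [h1, h2]

/-- High-temperature / FK expansion of a single Potts weight. -/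
private lemma potts_weight_expand [DecidableEq V] [DecidableEq E]
    (s t : E → V) (q : ℕ) (J : E → ℝ) (H : V → ℝ) (x : V → ZMod q) :
    pottsWeight s t q J H x =
      ∑ S ∈ (Finset.univ : Finset E).powerset, ∑ T ∈ (Finset.univ : Finset V).powerset,
        ((∏ e ∈ S, (Real.exp (J e) - 1)) * ∏ w ∈ T, (Real.exp (H w) - 1)) *
          (if (∀ e ∈ S, x (s e) = x (t e)) ∧ ∀ w ∈ T, x w = 0 then 1 else 0) := by
  classical
  have he : ∀ e : E, Real.exp (J e * (if x (s e) = x (t e) then 1 else 0)) =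
      (Real.exp (J e) - 1) * (if x (s e) = x (t e) then 1 else 0) + 1 := by
    intro e; split <;> simp
  have hv : ∀ w : V, Real.exp (H w * (if x w = 0 then 1 else 0)) =
      (Real.exp (H w) - 1) * (if x w = 0 then 1 else 0) + 1 := by
    intro w; split <;> simp
  rw [pottsWeight]
  simp_rw [he, hv]
  rw [Finset.prod_add, Finset.prod_add, Finset.sum_mul_sum]
  refine Finset.sum_congr rfl fun S _ => Finset.sum_congr rfl fun T _ => ?_
  rw [Finset.prod_const_one, Finset.prod_const_one, mul_one, mul_one,
    Finset.prod_mul_distrib, Finset.prod_mul_distrib, Finset.prod_boole, Finset.prod_boole]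
  by_cases h1 : ∀ e ∈ S, x (s e) = x (t e) <;> by_cases h2 : ∀ w ∈ T, x w = 0
  · rw [if_pos h1, if_pos h2, if_pos (⟨h1, h2⟩ : (∀ e ∈ S, x (s e) = x (t e)) ∧ ∀ w ∈ T, x w = 0)]
    ring
  · rw [if_pos h1, if_neg h2, if_neg fun h => h2 h.2]
    ring
  · rw [if_neg h1, if_pos h2, if_neg fun h => h1 h.1]
    ring
  · rw [if_neg h1, if_neg h2, if_neg fun h => h1 h.1]
    ring

/-- Key inequality: for a ferromagnetic Potts model in nonnegative field,
`Z ≤ q · (sum of weights of configurations with `x u = x v`)`. -/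
private lemma potts_key [DecidableEq V] (s t : E → V) (q : ℕ) [NeZero q]
    (J : E → ℝ) (H : V → ℝ) (hJ : ∀ e, 0 ≤ J e) (hH : ∀ w, 0 ≤ H w) (u v : V) :
    ∑ x : V → ZMod q, pottsWeight s t q J H x ≤
      (q : ℝ) * ∑ x ∈ Finset.univ.filter (fun x : V → ZMod q => x u = x v),
        pottsWeight s t q J H x := by
  classical
  have hL : ∑ x : V → ZMod q, pottsWeight s t q J H x =
      ∑ S ∈ (Finset.univ : Finset E).powerset, ∑ T ∈ (Finset.univ : Finset V).powerset,
        ((∏ e ∈ S, (Real.exp (J e) - 1)) * ∏ w ∈ T, (Real.exp (H w) - 1)) *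
          ((Finset.univ.filter fun x : V → ZMod q =>
            (∀ e ∈ S, x (s e) = x (t e)) ∧ ∀ w ∈ T, x w = 0).card : ℝ) := by
    simp_rw [potts_weight_expand s t q J H]
    rw [Finset.sum_comm]
    refine Finset.sum_congr rfl fun S _ => ?_
    rw [Finset.sum_comm]
    refine Finset.sum_congr rfl fun T _ => ?_
    rw [← Finset.mul_sum, Finset.sum_boole]
  have hR : ∑ x ∈ Finset.univ.filter (fun x : V → ZMod q => x u = x v),
      pottsWeight s t q J H x =
      ∑ S ∈ (Finset.univ : Finset E).powerset, ∑ T ∈ (Finset.univ : Finset V).powerset,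
        ((∏ e ∈ S, (Real.exp (J e) - 1)) * ∏ w ∈ T, (Real.exp (H w) - 1)) *
          ((Finset.univ.filter fun x : V → ZMod q =>
            x u = x v ∧ ((∀ e ∈ S, x (s e) = x (t e)) ∧ ∀ w ∈ T, x w = 0)).card : ℝ) := by
    simp_rw [potts_weight_expand s t q J H]
    rw [Finset.sum_comm]
    refine Finset.sum_congr rfl fun S _ => ?_
    rw [Finset.sum_comm]
    refine Finset.sum_congr rfl fun T _ => ?_
    rw [← Finset.mul_sum, Finset.sum_boole, Finset.filter_filter]
  rw [hL, hR, Finset.mul_sum]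
  refine Finset.sum_le_sum fun S _ => ?_
  rw [Finset.mul_sum]
  refine Finset.sum_le_sum fun T _ => ?_
  have hc : 0 ≤ (∏ e ∈ S, (Real.exp (J e) - 1)) * ∏ w ∈ T, (Real.exp (H w) - 1) :=
    mul_nonneg
      (Finset.prod_nonneg fun e _ => by nlinarith [Real.add_one_le_exp (J e), hJ e])
      (Finset.prod_nonneg fun w _ => by nlinarith [Real.add_one_le_exp (H w), hH w])
  have hcount := potts_count s t q S T u v
  rw [mul_left_comm]
  refine mul_le_mul_of_nonneg_left ?_ hc
  exact_mod_cast hcount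

end PottsAux

/-- Proposition 5 (first part): in a ferromagnetic q-state Potts model in a nonnegative
external field, the primal edge marginal satisfies
`π_p(e₀) ≥ e^{J e₀}/(e^{J e₀} − 1 + q)`. -/
theorem potts_primal_edge_marginal_bound {V E : Type*} [Fintype V] [Fintype E] [DecidableEq V]
    (s t : E → V) (q : ℕ) [NeZero q] (hq : 2 ≤ q) (J : E → ℝ) (H : V → ℝ)
    (hJ : ∀ e, 0 ≤ J e) (hH : ∀ v, 0 ≤ H v) (e₀ : E) :
    Real.exp (J e₀) / (Real.exp (J e₀) - 1 + (q : ℝ)) ≤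
      (∑ x ∈ Finset.univ.filter (fun x : V → ZMod q => x (s e₀) = x (t e₀)),
          pottsWeight s t q J H x) /
        ∑ x : V → ZMod q, pottsWeight s t q J H x := by
  classical
  have hq2 : (2 : ℝ) ≤ (q : ℝ) := by exact_mod_cast hq
  have heJpos : 0 < Real.exp (J e₀) := Real.exp_pos _
  set J' : E → ℝ := Function.update J e₀ 0 with hJ'def
  have hJ' : ∀ e, 0 ≤ J' e := by
    intro e
    rcases eq_or_ne e e₀ with h | h
    · rw [hJ'def, h, Function.update_self]
    · rw [hJ'def, Function.update_of_ne h]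
      exact hJ e
  have hsplit : ∀ x : V → ZMod q, pottsWeight s t q J H x =
      Real.exp (J e₀ * (if x (s e₀) = x (t e₀) then 1 else 0)) *
        pottsWeight s t q J' H x := by
    intro x
    unfold pottsWeight
    rw [Finset.prod_eq_mul_prod_sdiff_singleton_of_mem (Finset.mem_univ e₀)
        (fun e => Real.exp (J e * (if x (s e) = x (t e) then 1 else 0))),
      Finset.prod_eq_mul_prod_sdiff_singleton_of_mem (Finset.mem_univ e₀)
        (fun e => Real.exp (J' e * (if x (s e) = x (t e) then 1 else 0)))]
    have hcongr : ∀ e ∈ Finset.univ \ {e₀},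
        Real.exp (J' e * (if x (s e) = x (t e) then 1 else 0)) =
        Real.exp (J e * (if x (s e) = x (t e) then 1 else 0)) := by
      intro e he
      rw [hJ'def, Function.update_of_ne (by simpa using (Finset.mem_sdiff.mp he).2)]
    rw [Finset.prod_congr rfl hcongr, hJ'def, Function.update_self, zero_mul,
      Real.exp_zero, one_mul]
    ring
  set A' := ∑ x ∈ Finset.univ.filter (fun x : V → ZMod q => x (s e₀) = x (t e₀)),
      pottsWeight s t q J' H x with hA'
  set B' := ∑ x ∈ Finset.univ.filter (fun x : V → ZMod q => ¬ x (s e₀) = x (t e₀)),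
      pottsWeight s t q J' H x with hB'
  have hA : ∑ x ∈ Finset.univ.filter (fun x : V → ZMod q => x (s e₀) = x (t e₀)),
      pottsWeight s t q J H x = Real.exp (J e₀) * A' := by
    rw [hA', Finset.mul_sum]
    refine Finset.sum_congr rfl fun x hx => ?_
    rw [hsplit x, if_pos (Finset.mem_filter.mp hx).2, mul_one]
  have hB : ∑ x ∈ Finset.univ.filter (fun x : V → ZMod q => ¬ x (s e₀) = x (t e₀)),
      pottsWeight s t q J H x = B' := by
    rw [hB']
    refine Finset.sum_congr rfl fun x hx => ?_
    rw [hsplit x, if_neg (Finset.mem_filter.mp hx).2, mul_zero, Real.exp_zero, one_mul]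
  have hZ : ∑ x : V → ZMod q, pottsWeight s t q J H x = Real.exp (J e₀) * A' + B' := by
    rw [← hA, ← hB, Finset.sum_filter_add_sum_filter_not]
  have hZ' : ∑ x : V → ZMod q, pottsWeight s t q J' H x = A' + B' := by
    rw [hA', hB', Finset.sum_filter_add_sum_filter_not]
  have hkey := potts_key s t q J' H hJ' hH (s e₀) (t e₀)
  rw [hZ'] at hkey
  have hA'pos : 0 < A' := by
    rw [hA']
    refine Finset.sum_pos (fun x _ => pottsWeight_pos s t q J' H x)
      ⟨fun _ => 0, Finset.mem_filter.mpr ⟨Finset.mem_univ _, rfl⟩⟩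
  have hB'nn : 0 ≤ B' := by
    rw [hB']
    exact Finset.sum_nonneg fun x _ => (pottsWeight_pos s t q J' H x).le
  rw [hZ, hA, div_le_div_iff₀ (by nlinarith) (by nlinarith)]
  nlinarith [mul_le_mul_of_nonneg_left hkey heJpos.le, mul_pos heJpos hA'pos]
end

section
/- Dual edge-marginal bound and product bound for the ferromagnetic Potts model (Proposition 5, second part): with J(e) ≥ 0 for all e and H(v) ≥ 0 for all v, for every edge e₀ the dual edge marginal satisfies π_d(e₀) := (Σ_{ỹ : ỹ(e₀) = 0} W(ỹ)) / (Σ_ỹ W(ỹ)) ≥ (e^{J(e₀)} − 1 + q)/(q·e^{J(e₀)}); consequently, with π_p(e₀) the primal edge marginal of the corresponding primal Potts model, π_p(e₀)·π_d(e₀) ≥ 1/q. -/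
open scoped BigOperators

/-- The weight of a dual q-state Potts configuration `yt : E → ZMod q`:
`W(yt) = Π_e ψ̃_e(yt e) · Π_v φ̃_v(x̃_v(yt))`, with `ψ̃_e(0) = e^{J e} − 1 + q`,
`ψ̃_e(b) = e^{J e} − 1` for `b ≠ 0`, and similarly for `φ̃_v` with `H v`. -/
noncomputable def dualPottsWeight {V E : Type*} [Fintype V] [Fintype E] [DecidableEq V]
    (s t : E → V) (q : ℕ) (J : E → ℝ) (H : V → ℝ) (yt : E → ZMod q) : ℝ :=
  (∏ e : E, if yt e = 0 then Real.exp (J e) - 1 + (q : ℝ) else Real.exp (J e) - 1) *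
    ∏ v : V, if dualX s t q yt v = 0 then Real.exp (H v) - 1 + (q : ℝ) else Real.exp (H v) - 1

section PottsAux

open Finset

set_option linter.unusedSectionVars false
set_option maxHeartbeats 1000000

variable {q : ℕ} [NeZero q] {V E : Type*} [Fintype V] [Fintype E] [DecidableEq V] [DecidableEq E]

lemma charSum (d : ZMod q) :
    ∑ b : ZMod q, ZMod.stdAddChar (b * d) = if d = 0 then (q : ℂ) else 0 := by
  have := AddChar.sum_mulShift d (ZMod.isPrimitive_stdAddChar q)
  simpa [ZMod.card] using this

lemma charMapSum {ι : Type*} (s : Finset ι) (f : ι → ZMod q) :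
    ZMod.stdAddChar (∑ i ∈ s, f i) = ∏ i ∈ s, ZMod.stdAddChar (f i) := by
  induction s using Finset.cons_induction with
  | empty => simp
  | cons a s ha ih => rw [Finset.sum_cons, Finset.prod_cons, AddChar.map_add_eq_mul, ih]

lemma phiExpand (h : ℝ) (b : ZMod q) :
    ((if b = 0 then Real.exp h - 1 + (q : ℝ) else Real.exp h - 1 : ℝ) : ℂ) =
      ∑ k : ZMod q, (Real.exp (h * (if k = 0 then 1 else 0)) : ℂ) * ZMod.stdAddChar (k * b) := by
  have key : ∀ k : ZMod q, (Real.exp (h * (if k = 0 then 1 else 0)) : ℂ) =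
      (if k = 0 then ((Real.exp h - 1 : ℝ) : ℂ) else 0) + 1 := by
    intro k; split <;> simp
  simp_rw [key, add_mul, one_mul, Finset.sum_add_distrib, ite_mul, zero_mul,
    Finset.sum_ite_eq' Finset.univ (0 : ZMod q), charSum]
  simp only [mem_univ, if_true, zero_mul, AddChar.map_zero_eq_one, mul_one]
  split <;> push_cast <;> ring

lemma psiSum (j : ℝ) (d : ZMod q) :
    ∑ b : ZMod q, ((if b = 0 then Real.exp j - 1 + (q : ℝ) else Real.exp j - 1 : ℝ) : ℂ) *
        ZMod.stdAddChar (b * d) =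
      (q : ℂ) * (Real.exp (j * (if d = 0 then 1 else 0)) : ℂ) := by
  have key : ∀ b : ZMod q,
      ((if b = 0 then Real.exp j - 1 + (q : ℝ) else Real.exp j - 1 : ℝ) : ℂ) =
        ((Real.exp j - 1 : ℝ) : ℂ) + (if b = 0 then (q : ℂ) else 0) := by
    intro b; split <;> push_cast <;> ring
  simp_rw [key, add_mul, Finset.sum_add_distrib, ← Finset.mul_sum, charSum, ite_mul, zero_mul,
    Finset.sum_ite_eq' Finset.univ (0 : ZMod q)]
  simp only [mem_univ, if_true, zero_mul, AddChar.map_zero_eq_one, mul_one]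
  split
  · push_cast; ring
  · simp [Real.exp_zero]

lemma key1 (s t : E → V) (q : ℕ) (x : V → ZMod q) (yt : E → ZMod q) :
    ∑ v, x v * dualX s t q yt v = ∑ e, yt e * (x (t e) - x (s e)) := by
  have hs : ∑ v, ∑ e ∈ univ.filter (fun e => s e = v), x (s e) * yt e
      = ∑ e, x (s e) * yt e := Finset.sum_fiberwise univ s (fun e => x (s e) * yt e)
  have ht : ∑ v, ∑ e ∈ univ.filter (fun e => t e = v), x (t e) * yt e
      = ∑ e, x (t e) * yt e := Finset.sum_fiberwise univ t (fun e => x (t e) * yt e)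
  calc ∑ v, x v * dualX s t q yt v
      = ∑ v, ((∑ e ∈ univ.filter (fun e => t e = v), x (t e) * yt e)
          - ∑ e ∈ univ.filter (fun e => s e = v), x (s e) * yt e) := by
        refine Finset.sum_congr rfl fun v _ => ?_
        rw [dualX, mul_neg, mul_sub, neg_sub, Finset.mul_sum, Finset.mul_sum]
        congr 1 <;> refine Finset.sum_congr rfl fun e he => ?_ <;>
          rw [(Finset.mem_filter.1 he).2]
    _ = ∑ e, x (t e) * yt e - ∑ e, x (s e) * yt e := by
        rw [Finset.sum_sub_distrib, hs, ht]
    _ = _ := by rw [← Finset.sum_sub_distrib]; exact Finset.sum_congr rfl fun e _ => by ring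

lemma dual_main (s t : E → V) (H : V → ℝ) (ρ : E → ZMod q → ℂ) :
    ∑ yt : E → ZMod q, (∏ e, ρ e (yt e)) *
        ∏ v, ((if dualX s t q yt v = 0 then Real.exp (H v) - 1 + (q : ℝ)
          else Real.exp (H v) - 1 : ℝ) : ℂ)
      = ∑ x : V → ZMod q, (∏ v, (Real.exp (H v * (if x v = 0 then 1 else 0)) : ℂ)) *
          ∏ e, ∑ b : ZMod q, ρ e b * ZMod.stdAddChar (b * (x (t e) - x (s e))) := by
  have step1 : ∀ yt : E → ZMod q,
      (∏ v, ((if dualX s t q yt v = 0 then Real.exp (H v) - 1 + (q : ℝ)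
          else Real.exp (H v) - 1 : ℝ) : ℂ))
      = ∑ x : V → ZMod q, (∏ v, (Real.exp (H v * (if x v = 0 then 1 else 0)) : ℂ)) *
          ZMod.stdAddChar (∑ e, yt e * (x (t e) - x (s e))) := by
    intro yt
    calc (∏ v, ((if dualX s t q yt v = 0 then Real.exp (H v) - 1 + (q : ℝ)
            else Real.exp (H v) - 1 : ℝ) : ℂ))
        = ∏ v, ∑ k : ZMod q, (Real.exp (H v * (if k = 0 then 1 else 0)) : ℂ) *
            ZMod.stdAddChar (k * dualX s t q yt v) := by
          exact Finset.prod_congr rfl fun v _ => phiExpand (H v) _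
      _ = ∑ x : V → ZMod q, ∏ v, (Real.exp (H v * (if x v = 0 then 1 else 0)) : ℂ) *
            ZMod.stdAddChar (x v * dualX s t q yt v) := Fintype.prod_sum _
      _ = ∑ x : V → ZMod q, (∏ v, (Real.exp (H v * (if x v = 0 then 1 else 0)) : ℂ)) *
            ZMod.stdAddChar (∑ e, yt e * (x (t e) - x (s e))) := by
          refine Finset.sum_congr rfl fun x _ => ?_
          rw [Finset.prod_mul_distrib, ← charMapSum, key1]
  calc ∑ yt : E → ZMod q, (∏ e, ρ e (yt e)) *
        ∏ v, ((if dualX s t q yt v = 0 then Real.exp (H v) - 1 + (q : ℝ)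
          else Real.exp (H v) - 1 : ℝ) : ℂ)
      = ∑ yt : E → ZMod q, ∑ x : V → ZMod q,
          (∏ v, (Real.exp (H v * (if x v = 0 then 1 else 0)) : ℂ)) *
            ((∏ e, ρ e (yt e)) * ZMod.stdAddChar (∑ e, yt e * (x (t e) - x (s e)))) := by
        refine Finset.sum_congr rfl fun yt _ => ?_
        rw [step1 yt, Finset.mul_sum]
        exact Finset.sum_congr rfl fun x _ => by ring
    _ = ∑ x : V → ZMod q, ∑ yt : E → ZMod q,
          (∏ v, (Real.exp (H v * (if x v = 0 then 1 else 0)) : ℂ)) *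
            ((∏ e, ρ e (yt e)) * ZMod.stdAddChar (∑ e, yt e * (x (t e) - x (s e)))) :=
        Finset.sum_comm
    _ = ∑ x : V → ZMod q, (∏ v, (Real.exp (H v * (if x v = 0 then 1 else 0)) : ℂ)) *
          ∑ yt : E → ZMod q, (∏ e, ρ e (yt e)) *
            ZMod.stdAddChar (∑ e, yt e * (x (t e) - x (s e))) :=
        Finset.sum_congr rfl fun x _ => (Finset.mul_sum _ _ _).symm
    _ = _ := by
        refine Finset.sum_congr rfl fun x _ => ?_
        congr 1
        calc ∑ yt : E → ZMod q, (∏ e, ρ e (yt e)) *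
              ZMod.stdAddChar (∑ e, yt e * (x (t e) - x (s e)))
            = ∑ yt : E → ZMod q, ∏ e, ρ e (yt e) *
                ZMod.stdAddChar (yt e * (x (t e) - x (s e))) := by
              refine Finset.sum_congr rfl fun yt _ => ?_
              rw [charMapSum, Finset.prod_mul_distrib]
          _ = ∏ e, ∑ b : ZMod q, ρ e b * ZMod.stdAddChar (b * (x (t e) - x (s e))) := by
              exact (Fintype.prod_sum fun e b =>
                ρ e b * ZMod.stdAddChar (b * (x (t e) - x (s e)))).symm

lemma ite_sub_zero {q : ℕ} (a b : ZMod q) :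
    (if b - a = 0 then (1:ℝ) else 0) = if a = b then 1 else 0 := by
  simp [sub_eq_zero, eq_comm]

lemma C1 (s t : E → V) (J : E → ℝ) (H : V → ℝ) :
    ∑ yt : E → ZMod q, dualPottsWeight s t q J H yt
      = (q : ℝ) ^ (Fintype.card E) * ∑ x : V → ZMod q, pottsWeight s t q J H x := by
  have := dual_main (q := q) s t H (fun e b =>
    ((if b = 0 then Real.exp (J e) - 1 + (q : ℝ) else Real.exp (J e) - 1 : ℝ) : ℂ))
  have lhs : ∑ yt : E → ZMod q, ((dualPottsWeight s t q J H yt : ℝ) : ℂ)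
      = ∑ yt : E → ZMod q, (∏ e, ((if yt e = 0 then Real.exp (J e) - 1 + (q : ℝ)
          else Real.exp (J e) - 1 : ℝ) : ℂ)) *
        ∏ v, ((if dualX s t q yt v = 0 then Real.exp (H v) - 1 + (q : ℝ)
          else Real.exp (H v) - 1 : ℝ) : ℂ) := by
    refine Finset.sum_congr rfl fun yt _ => ?_
    rw [dualPottsWeight]
    push_cast
    rfl
  have rhs : ∀ x : V → ZMod q,
      (∏ v, (Real.exp (H v * (if x v = 0 then 1 else 0)) : ℂ)) *
        ∏ e, ∑ b : ZMod q, ((if b = 0 then Real.exp (J e) - 1 + (q : ℝ)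
            else Real.exp (J e) - 1 : ℝ) : ℂ) *
          ZMod.stdAddChar (b * (x (t e) - x (s e)))
      = (q : ℂ) ^ (Fintype.card E) * ((pottsWeight s t q J H x : ℝ) : ℂ) := by
    intro x
    have h2 : ∀ e : E, ∑ b : ZMod q, ((if b = 0 then Real.exp (J e) - 1 + (q : ℝ)
            else Real.exp (J e) - 1 : ℝ) : ℂ) * ZMod.stdAddChar (b * (x (t e) - x (s e)))
        = (q : ℂ) * ((Real.exp (J e * (if x (s e) = x (t e) then 1 else 0)) : ℝ) : ℂ) := by
      intro e
      rw [psiSum (J e) (x (t e) - x (s e))]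
      congr 2
      rw [ite_sub_zero]
    rw [Finset.prod_congr rfl fun e _ => h2 e, Finset.prod_mul_distrib, Finset.prod_const,
      Finset.card_univ, pottsWeight]
    push_cast
    ring
  apply Complex.ofReal_inj.mp
  calc ((∑ yt : E → ZMod q, dualPottsWeight s t q J H yt : ℝ) : ℂ)
      = ∑ yt : E → ZMod q, ((dualPottsWeight s t q J H yt : ℝ) : ℂ) := by push_cast; rfl
    _ = (q : ℂ) ^ (Fintype.card E) * ∑ x : V → ZMod q, ((pottsWeight s t q J H x : ℝ) : ℂ) := by
        rw [lhs, this, Finset.sum_congr rfl fun x _ => rhs x, ← Finset.mul_sum]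
    _ = (((q : ℝ) ^ (Fintype.card E) * ∑ x : V → ZMod q, pottsWeight s t q J H x : ℝ) : ℂ) := by
        push_cast; rfl

noncomputable def pwE (s t : E → V) (q : ℕ) (J : E → ℝ) (H : V → ℝ) (e₀ : E)
    (x : V → ZMod q) : ℝ :=
  (∏ e ∈ Finset.univ.erase e₀, Real.exp (J e * (if x (s e) = x (t e) then 1 else 0))) *
    ∏ v : V, Real.exp (H v * (if x v = 0 then 1 else 0))

lemma C2 (s t : E → V) (J : E → ℝ) (H : V → ℝ) (e₀ : E) :
    ∑ yt ∈ Finset.univ.filter (fun yt : E → ZMod q => yt e₀ = 0),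
        dualPottsWeight s t q J H yt
      = (q : ℝ) ^ (Fintype.card E - 1) * (Real.exp (J e₀) - 1 + (q : ℝ)) *
          ∑ x : V → ZMod q, pwE s t q J H e₀ x := by
  set ρ : E → ZMod q → ℂ := fun e b =>
    (if e = e₀ then (if b = 0 then (1:ℂ) else 0) else 1) *
      ((if b = 0 then Real.exp (J e) - 1 + (q : ℝ) else Real.exp (J e) - 1 : ℝ) : ℂ) with hρ
  have hmain := dual_main (q := q) s t H ρ
  have lhs : ∑ yt ∈ Finset.univ.filter (fun yt : E → ZMod q => yt e₀ = 0),
        ((dualPottsWeight s t q J H yt : ℝ) : ℂ)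
      = ∑ yt : E → ZMod q, (∏ e, ρ e (yt e)) *
        ∏ v, ((if dualX s t q yt v = 0 then Real.exp (H v) - 1 + (q : ℝ)
          else Real.exp (H v) - 1 : ℝ) : ℂ) := by
    rw [Finset.sum_filter]
    refine Finset.sum_congr rfl fun yt _ => ?_
    have hsplit : ∏ e, ρ e (yt e)
        = (if yt e₀ = 0 then (1:ℂ) else 0) *
          ∏ e, ((if yt e = 0 then Real.exp (J e) - 1 + (q : ℝ)
            else Real.exp (J e) - 1 : ℝ) : ℂ) := by
      rw [hρ, Finset.prod_mul_distrib]
      congr 1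
      rw [Finset.prod_ite_eq' Finset.univ e₀ (fun e => if yt e = 0 then (1:ℂ) else 0)]
      simp
    rw [hsplit]
    split
    · rw [one_mul, dualPottsWeight]
      push_cast
      rfl
    · rw [zero_mul, zero_mul]
  have rhs : ∀ x : V → ZMod q,
      (∏ v, (Real.exp (H v * (if x v = 0 then 1 else 0)) : ℂ)) *
        ∏ e, ∑ b : ZMod q, ρ e b * ZMod.stdAddChar (b * (x (t e) - x (s e)))
      = (q : ℂ) ^ (Fintype.card E - 1) * ((Real.exp (J e₀) - 1 + (q : ℝ) : ℝ) : ℂ) *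
          ((pwE s t q J H e₀ x : ℝ) : ℂ) := by
    intro x
    have h0 : ∑ b : ZMod q, ρ e₀ b * ZMod.stdAddChar (b * (x (t e₀) - x (s e₀)))
        = ((Real.exp (J e₀) - 1 + (q : ℝ) : ℝ) : ℂ) := by
      rw [hρ]
      simp only [if_pos rfl]
      rw [Finset.sum_eq_single (0 : ZMod q)]
      · simp
      · intro b _ hb; simp [hb]
      · simp
    have h2 : ∀ e ∈ Finset.univ.erase e₀,
        ∑ b : ZMod q, ρ e b * ZMod.stdAddChar (b * (x (t e) - x (s e)))
        = (q : ℂ) * ((Real.exp (J e * (if x (s e) = x (t e) then 1 else 0)) : ℝ) : ℂ) := by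
      intro e he
      have hne : e ≠ e₀ := (Finset.mem_erase.1 he).1
      have : ∀ b : ZMod q, ρ e b = ((if b = 0 then Real.exp (J e) - 1 + (q : ℝ)
          else Real.exp (J e) - 1 : ℝ) : ℂ) := by
        intro b; rw [hρ]; simp [hne]
      simp_rw [this]
      rw [psiSum (J e) (x (t e) - x (s e))]
      congr 2
      rw [ite_sub_zero]
    rw [← Finset.mul_prod_erase Finset.univ _ (Finset.mem_univ e₀), h0,
      Finset.prod_congr rfl h2, Finset.prod_mul_distrib, Finset.prod_const,
      Finset.card_erase_of_mem (Finset.mem_univ e₀), Finset.card_univ, pwE]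
    push_cast
    ring
  apply Complex.ofReal_inj.mp
  calc ((∑ yt ∈ Finset.univ.filter (fun yt : E → ZMod q => yt e₀ = 0),
          dualPottsWeight s t q J H yt : ℝ) : ℂ)
      = ∑ yt ∈ Finset.univ.filter (fun yt : E → ZMod q => yt e₀ = 0),
          ((dualPottsWeight s t q J H yt : ℝ) : ℂ) := by push_cast; rfl
    _ = (q : ℂ) ^ (Fintype.card E - 1) * ((Real.exp (J e₀) - 1 + (q : ℝ) : ℝ) : ℂ) *
          ∑ x : V → ZMod q, ((pwE s t q J H e₀ x : ℝ) : ℂ) := by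
        rw [lhs, hmain, Finset.sum_congr rfl fun x _ => rhs x, ← Finset.mul_sum]
    _ = (((q : ℝ) ^ (Fintype.card E - 1) * (Real.exp (J e₀) - 1 + (q : ℝ)) *
          ∑ x : V → ZMod q, pwE s t q J H e₀ x : ℝ) : ℂ) := by
        push_cast; rfl

lemma expand_pwE (s t : E → V) (J : E → ℝ) (H : V → ℝ) (e₀ : E) (x : V → ZMod q) :
    pwE s t q J H e₀ x
      = ∑ S ∈ (Finset.univ.erase e₀).powerset, ∑ T ∈ (Finset.univ : Finset V).powerset,
          ((∏ e ∈ S, (Real.exp (J e) - 1)) * ∏ v ∈ T, (Real.exp (H v) - 1)) *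
            if (∀ e ∈ S, x (s e) = x (t e)) ∧ (∀ v ∈ T, x v = 0) then 1 else 0 := by
  have he : ∀ e : E, Real.exp (J e * (if x (s e) = x (t e) then 1 else 0))
      = (Real.exp (J e) - 1) * (if x (s e) = x (t e) then 1 else 0) + 1 := by
    intro e
    by_cases h : x (s e) = x (t e) <;> simp [h]
  have hv : ∀ v : V, Real.exp (H v * (if x v = 0 then 1 else 0))
      = (Real.exp (H v) - 1) * (if x v = 0 then 1 else 0) + 1 := by
    intro v
    by_cases h : x v = 0 <;> simp [h]
  rw [pwE]
  simp_rw [he, hv]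
  rw [Finset.prod_add, Finset.prod_add, Finset.sum_mul_sum]
  refine Finset.sum_congr rfl fun S _ => Finset.sum_congr rfl fun T _ => ?_
  rw [Finset.prod_const_one, Finset.prod_const_one, mul_one, mul_one,
    Finset.prod_mul_distrib, Finset.prod_mul_distrib, Finset.prod_boole, Finset.prod_boole]
  split_ifs <;> first | (exfalso; tauto) | ring

lemma count_le (s t : E → V) (u w : V) (S : Finset E) (T : Finset V) :
    ((Finset.univ.filter (fun x : V → ZMod q =>
        (∀ e ∈ S, x (s e) = x (t e)) ∧ ∀ v ∈ T, x v = 0)).card : ℝ)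
      ≤ q * ((Finset.univ.filter (fun x : V → ZMod q =>
        x u = x w ∧ ((∀ e ∈ S, x (s e) = x (t e)) ∧ ∀ v ∈ T, x v = 0))).card : ℝ) := by
  set P : (V → ZMod q) → Prop := fun x => (∀ e ∈ S, x (s e) = x (t e)) ∧ ∀ v ∈ T, x v = 0
    with hP
  set A : Finset (V → ZMod q) := Finset.univ.filter P with hA
  have hfib : A.card = ∑ c : ZMod q, (A.filter (fun x => x u - x w = c)).card :=
    Finset.card_eq_sum_card_fiberwise (fun x _ => Finset.mem_univ _)
  have hle : ∀ c : ZMod q, (A.filter (fun x => x u - x w = c)).card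
      ≤ (A.filter (fun x => x u - x w = 0)).card := by
    intro c
    rcases (A.filter (fun x => x u - x w = c)).eq_empty_or_nonempty with h | ⟨x₀, hx₀⟩
    · simp [h]
    · have hx₀' := Finset.mem_filter.1 hx₀
      have hx₀A := Finset.mem_filter.1 hx₀'.1
      refine Finset.card_le_card_of_injOn (fun x => x - x₀) ?_ ?_
      · intro x hx
        have hx' := Finset.mem_filter.1 hx
        have hxA := Finset.mem_filter.1 hx'.1
        refine Finset.mem_filter.2 ⟨Finset.mem_filter.2 ⟨Finset.mem_univ _, ?_, ?_⟩, ?_⟩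
        · intro e he
          have h1 := hxA.2.1 e he
          have h2 := hx₀A.2.1 e he
          simp only [Pi.sub_apply, h1, h2]
        · intro v hv
          have h1 := hxA.2.2 v hv
          have h2 := hx₀A.2.2 v hv
          simp only [Pi.sub_apply, h1, h2, sub_zero]
        · have h1 := hx'.2
          have h2 := hx₀'.2
          simp only [Pi.sub_apply]
          rw [sub_sub_sub_comm, h1, h2, sub_self]
      · intro a _ b _ hab
        exact sub_left_injective hab
  have hq : A.card ≤ q * (A.filter (fun x => x u - x w = 0)).card := by
    calc A.card = ∑ c : ZMod q, (A.filter (fun x => x u - x w = c)).card := hfib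
      _ ≤ ∑ _c : ZMod q, (A.filter (fun x => x u - x w = 0)).card :=
          Finset.sum_le_sum fun c _ => hle c
      _ = q * (A.filter (fun x => x u - x w = 0)).card := by
          rw [Finset.sum_const, Finset.card_univ, ZMod.card, smul_eq_mul]
  have heq : A.filter (fun x => x u - x w = 0)
      = Finset.univ.filter (fun x : V → ZMod q => x u = x w ∧ P x) := by
    rw [hA, Finset.filter_filter]
    exact Finset.filter_congr fun x _ => by rw [sub_eq_zero]; tauto
  rw [heq] at hq
  exact_mod_cast hq

lemma corr (s t : E → V) (J : E → ℝ) (H : V → ℝ)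
    (hJ : ∀ e, 0 ≤ J e) (hH : ∀ v, 0 ≤ H v) (e₀ : E) :
    ∑ x : V → ZMod q, pwE s t q J H e₀ x
      ≤ q * ∑ x ∈ Finset.univ.filter (fun x : V → ZMod q => x (s e₀) = x (t e₀)),
          pwE s t q J H e₀ x := by
  have hc : ∀ (S : Finset E) (T : Finset V),
      0 ≤ (∏ e ∈ S, (Real.exp (J e) - 1)) * ∏ v ∈ T, (Real.exp (H v) - 1) := by
    intro S T
    apply mul_nonneg <;> apply Finset.prod_nonneg <;> intro i _ <;>
      simp [sub_nonneg, Real.one_le_exp (by first | exact hJ i | exact hH i)]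
  have total : ∑ x : V → ZMod q, pwE s t q J H e₀ x
      = ∑ S ∈ (Finset.univ.erase e₀).powerset, ∑ T ∈ (Finset.univ : Finset V).powerset,
          ((∏ e ∈ S, (Real.exp (J e) - 1)) * ∏ v ∈ T, (Real.exp (H v) - 1)) *
            ((Finset.univ.filter (fun x : V → ZMod q =>
              (∀ e ∈ S, x (s e) = x (t e)) ∧ ∀ v ∈ T, x v = 0)).card : ℝ) := by
    simp_rw [expand_pwE]
    rw [Finset.sum_comm]
    refine Finset.sum_congr rfl fun S _ => ?_
    rw [Finset.sum_comm]
    refine Finset.sum_congr rfl fun T _ => ?_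
    rw [← Finset.mul_sum, Finset.sum_boole]
  have part : ∑ x ∈ Finset.univ.filter (fun x : V → ZMod q => x (s e₀) = x (t e₀)),
        pwE s t q J H e₀ x
      = ∑ S ∈ (Finset.univ.erase e₀).powerset, ∑ T ∈ (Finset.univ : Finset V).powerset,
          ((∏ e ∈ S, (Real.exp (J e) - 1)) * ∏ v ∈ T, (Real.exp (H v) - 1)) *
            ((Finset.univ.filter (fun x : V → ZMod q => x (s e₀) = x (t e₀) ∧
              ((∀ e ∈ S, x (s e) = x (t e)) ∧ ∀ v ∈ T, x v = 0))).card : ℝ) := by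
    simp_rw [expand_pwE]
    rw [Finset.sum_comm]
    refine Finset.sum_congr rfl fun S _ => ?_
    rw [Finset.sum_comm]
    refine Finset.sum_congr rfl fun T _ => ?_
    rw [← Finset.mul_sum, Finset.sum_boole, Finset.filter_filter]
  rw [total, part, Finset.mul_sum]
  refine Finset.sum_le_sum fun S _ => ?_
  rw [Finset.mul_sum]
  refine Finset.sum_le_sum fun T _ => ?_
  calc ((∏ e ∈ S, (Real.exp (J e) - 1)) * ∏ v ∈ T, (Real.exp (H v) - 1)) *
        ((Finset.univ.filter (fun x : V → ZMod q =>
          (∀ e ∈ S, x (s e) = x (t e)) ∧ ∀ v ∈ T, x v = 0)).card : ℝ)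
      ≤ ((∏ e ∈ S, (Real.exp (J e) - 1)) * ∏ v ∈ T, (Real.exp (H v) - 1)) *
        ((q : ℝ) * ((Finset.univ.filter (fun x : V → ZMod q => x (s e₀) = x (t e₀) ∧
          ((∀ e ∈ S, x (s e) = x (t e)) ∧ ∀ v ∈ T, x v = 0))).card : ℝ)) :=
        mul_le_mul_of_nonneg_left (count_le s t (s e₀) (t e₀) S T) (hc S T)
    _ = _ := by ring

end PottsAux

/-- Proposition 5 (second part): `π_d(e₀) ≥ (e^{J e₀} − 1 + q)/(q e^{J e₀})`, and
consequently `π_p(e₀)·π_d(e₀) ≥ 1/q`. -/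
theorem potts_dual_edge_marginal_bound {V E : Type*} [Fintype V] [Fintype E]
    [DecidableEq V] [DecidableEq E]
    (s t : E → V) (q : ℕ) [NeZero q] (hq : 2 ≤ q) (J : E → ℝ) (H : V → ℝ)
    (hJ : ∀ e, 0 ≤ J e) (hH : ∀ v, 0 ≤ H v) (e₀ : E) :
    (Real.exp (J e₀) - 1 + (q : ℝ)) / ((q : ℝ) * Real.exp (J e₀)) ≤
      (∑ yt ∈ Finset.univ.filter (fun yt : E → ZMod q => yt e₀ = 0),
          dualPottsWeight s t q J H yt) /
        (∑ yt : E → ZMod q, dualPottsWeight s t q J H yt) ∧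
    1 / (q : ℝ) ≤
      ((∑ x ∈ Finset.univ.filter (fun x : V → ZMod q => x (s e₀) = x (t e₀)),
          pottsWeight s t q J H x) / ∑ x : V → ZMod q, pottsWeight s t q J H x) *
      ((∑ yt ∈ Finset.univ.filter (fun yt : E → ZMod q => yt e₀ = 0),
          dualPottsWeight s t q J H yt) /
        ∑ yt : E → ZMod q, dualPottsWeight s t q J H yt) := by
  have hq0 : (0:ℝ) < q := by positivity
  have hq2 : (2:ℝ) ≤ (q:ℝ) := by exact_mod_cast hq
  have hc : 1 ≤ Real.exp (J e₀) := Real.one_le_exp (hJ e₀)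
  have hc0 : 0 < Real.exp (J e₀) := Real.exp_pos _
  set A := ∑ x ∈ Finset.univ.filter (fun x : V → ZMod q => x (s e₀) = x (t e₀)),
      pwE s t q J H e₀ x with hAdef
  set B := ∑ x ∈ Finset.univ.filter (fun x : V → ZMod q => ¬ x (s e₀) = x (t e₀)),
      pwE s t q J H e₀ x with hBdef
  clear_value A B
  have hpw_pos : ∀ x : V → ZMod q, 0 < pwE s t q J H e₀ x := by
    intro x
    rw [pwE]
    positivity
  have hA : 0 < A := by
    rw [hAdef]
    exact Finset.sum_pos (fun x _ => hpw_pos x) ⟨fun _ => 0, by simp⟩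
  have hB : 0 ≤ B := by
    rw [hBdef]
    exact Finset.sum_nonneg fun x _ => (hpw_pos x).le
  have hZ' : ∑ x : V → ZMod q, pwE s t q J H e₀ x = A + B := by
    rw [hAdef, hBdef]
    exact (Finset.sum_filter_add_sum_filter_not _ _ _).symm
  have hpotts : ∀ x : V → ZMod q, pottsWeight s t q J H x
      = Real.exp (J e₀ * (if x (s e₀) = x (t e₀) then 1 else 0)) * pwE s t q J H e₀ x := by
    intro x
    rw [pottsWeight, pwE, ← Finset.mul_prod_erase Finset.univ _ (Finset.mem_univ e₀), mul_assoc]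
  have hNum : ∑ x ∈ Finset.univ.filter (fun x : V → ZMod q => x (s e₀) = x (t e₀)),
      pottsWeight s t q J H x = Real.exp (J e₀) * A := by
    rw [hAdef, Finset.mul_sum]
    refine Finset.sum_congr rfl fun x hx => ?_
    rw [hpotts, if_pos (Finset.mem_filter.1 hx).2, mul_one]
  have hNum' : ∑ x ∈ Finset.univ.filter (fun x : V → ZMod q => ¬ x (s e₀) = x (t e₀)),
      pottsWeight s t q J H x = B := by
    rw [hBdef]
    refine Finset.sum_congr rfl fun x hx => ?_
    rw [hpotts, if_neg (Finset.mem_filter.1 hx).2, mul_zero, Real.exp_zero, one_mul]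
  have hZ : ∑ x : V → ZMod q, pottsWeight s t q J H x = Real.exp (J e₀) * A + B := by
    rw [← Finset.sum_filter_add_sum_filter_not Finset.univ
      (fun x : V → ZMod q => x (s e₀) = x (t e₀)) (pottsWeight s t q J H), hNum, hNum']
  have hcorr : A + B ≤ q * A := by
    have := corr (q := q) s t J H hJ hH e₀
    rwa [hZ', ← hAdef] at this
  have hn : 1 ≤ Fintype.card E := Fintype.card_pos_iff.2 ⟨e₀⟩
  have hK0 : (0:ℝ) < (q:ℝ) ^ (Fintype.card E - 1) := by positivity
  have hqn : (q:ℝ) ^ (Fintype.card E) = (q:ℝ) ^ (Fintype.card E - 1) * q := by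
    rw [← pow_succ, Nat.sub_add_cancel hn]
  have hSd : ∑ yt : E → ZMod q, dualPottsWeight s t q J H yt
      = (q:ℝ) ^ (Fintype.card E - 1) * ((q:ℝ) * (Real.exp (J e₀) * A + B)) := by
    rw [C1 (q := q) s t J H, hZ, hqn]
    ring
  have hSd0 : ∑ yt ∈ Finset.univ.filter (fun yt : E → ZMod q => yt e₀ = 0),
        dualPottsWeight s t q J H yt
      = (q:ℝ) ^ (Fintype.card E - 1) * ((Real.exp (J e₀) - 1 + (q:ℝ)) * (A + B)) := by
    rw [C2 (q := q) s t J H e₀, hZ']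
    ring
  have hD : 0 < Real.exp (J e₀) * A + B := by nlinarith
  have hratio : (∑ yt ∈ Finset.univ.filter (fun yt : E → ZMod q => yt e₀ = 0),
        dualPottsWeight s t q J H yt) /
      (∑ yt : E → ZMod q, dualPottsWeight s t q J H yt)
      = ((Real.exp (J e₀) - 1 + (q:ℝ)) * (A + B)) /
        ((q:ℝ) * (Real.exp (J e₀) * A + B)) := by
    rw [hSd, hSd0, mul_div_mul_left _ _ (ne_of_gt hK0)]
  constructor
  · rw [hratio, div_le_div_iff₀ (by positivity) (by positivity)]
    nlinarith [mul_nonneg (sub_nonneg.2 hc) hB,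
      mul_pos hq0 (by nlinarith : (0:ℝ) < Real.exp (J e₀) - 1 + (q:ℝ))]
  · rw [hratio, hNum, hZ, div_mul_div_comm,
      div_le_div_iff₀ hq0 (by positivity)]
    have hd : 0 ≤ ((q:ℝ)-1)*A - B := by nlinarith
    have h1 : 0 ≤ (q:ℝ) * (B * (((q:ℝ)-1)*A - B)) :=
      mul_nonneg hq0.le (mul_nonneg hB hd)
    have h2 : 0 ≤ (q:ℝ) * (Real.exp (J e₀)*A*(((q:ℝ)-1)*A - B)) :=
      mul_nonneg hq0.le (mul_nonneg (mul_nonneg hc0.le hA.le) hd)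
    have h3 : 0 ≤ (q:ℝ) * (A*B*((Real.exp (J e₀)-1)*(Real.exp (J e₀)+(q:ℝ)-1))) :=
      mul_nonneg hq0.le (mul_nonneg (mul_nonneg hA.le hB)
        (mul_nonneg (by linarith) (by linarith)))
    nlinarith [h1, h2, h3]
end

section
/- High-temperature series expansion of the Ising partition function in an external field (equation (32) with explicit constants): let V and E be finite types, s, t : E → V with s e ≠ t e for all e, J : E → ℝ, and H ∈ ℝ. Then Σ_{σ : V → {−1,1}} exp( Σ_{e∈E} J(e)·σ(s e)·σ(t e) + H·Σ_{v∈V} σ(v) ) = 2^{|V|} · (cosh H)^{|V|} · (Π_{e∈E} cosh(J(e))) · Σ_{U ⊆ E} (tanh H)^{|odd(U)|} · Π_{e∈U} tanh(J(e)), where the sum ranges over all finite subsets U of E and odd(U) = { v ∈ V : the number of e ∈ U with s e = v or t e = v is odd }. -/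
/-!
For a spin `x = ±1` one has `exp (c x) = cosh c * (1 + x tanh c)`. Pulling out the cosh factors
and expanding the product over edges as a sum over edge subsets `U`, the bond product of `U` is
`∏ v, σ v ^ deg_U v`. The spin sum then factorises over vertices, and
`∑_{x = ±1} x ^ d (1 + x tanh H)` equals `2` for even `d` and `2 tanh H` for odd `d`.
-/

open Finset Real

lemma Real.exp_mul_units_int (c : ℝ) (u : ℤˣ) :
    exp (c * ((u : ℤ) : ℝ)) = cosh c * (1 + ((u : ℤ) : ℝ) * tanh c) := by
  have hsinh : cosh c * tanh c = sinh c := by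
    rw [tanh_eq_sinh_div_cosh, mul_div_cancel₀ _ (cosh_pos c).ne']
  rcases Int.units_eq_one_or u with rfl | rfl
  · rw [Units.val_one, Int.cast_one, mul_one, ← cosh_add_sinh]
    linear_combination -hsinh
  · rw [Units.val_neg, Units.val_one, Int.cast_neg, Int.cast_one, mul_neg_one, ← cosh_sub_sinh]
    linear_combination hsinh

lemma Real.exp_sum_mul_units_int {ι : Type*} (s : Finset ι) (c : ι → ℝ) (x : ι → ℤˣ) :
    exp (∑ i ∈ s, c i * ((x i : ℤ) : ℝ)) =
      (∏ i ∈ s, cosh (c i)) * ∏ i ∈ s, (1 + ((x i : ℤ) : ℝ) * tanh (c i)) := by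
  simp only [exp_sum, exp_mul_units_int, prod_mul_distrib]

lemma sum_units_int_pow_mul_one_add {R : Type*} [CommRing R] (d : ℕ) (a : R) :
    ∑ u : ℤˣ, ((u : ℤ) : R) ^ d * (1 + ((u : ℤ) : R) * a) = 2 * a ^ (if Odd d then 1 else 0) := by
  have huniv : (univ : Finset ℤˣ) = {1, -1} := by decide
  rw [huniv, sum_pair (by decide)]
  rcases Nat.even_or_odd d with hd | hd
  · rw [if_neg (Nat.not_odd_iff_even.mpr hd)]
    push_cast [hd.neg_one_pow]
    ring
  · rw [if_pos hd]
    push_cast [hd.neg_one_pow]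
    ring

lemma sum_spins_prod_pow_mul_one_add {V R : Type*} [Fintype V] [DecidableEq V] [CommRing R]
    (d : V → ℕ) (a : R) :
    ∑ σ : V → ℤˣ, ∏ v, ((σ v : ℤ) : R) ^ d v * (1 + ((σ v : ℤ) : R) * a) =
      2 ^ Fintype.card V * a ^ #{v | Odd (d v)} := by
  rw [← Fintype.prod_sum (fun v (u : ℤˣ) => ((u : ℤ) : R) ^ d v * (1 + ((u : ℤ) : R) * a))]
  simp only [sum_units_int_pow_mul_one_add, prod_mul_distrib, prod_const, card_univ,
    prod_pow_eq_pow_sum, sum_boole, Nat.cast_id]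

lemma prod_mul_eq_prod_pow_card_incident {V E M : Type*} [Fintype V] [DecidableEq V]
    [CommMonoid M] (s t : E → V) (hst : ∀ e, s e ≠ t e) (f : V → M) (U : Finset E) :
    ∏ e ∈ U, f (s e) * f (t e) = ∏ v, f v ^ #{e ∈ U | s e = v ∨ t e = v} := by
  have hends : ∀ e, f (s e) * f (t e) = ∏ v ∈ {v | s e = v ∨ t e = v}, f v := by
    intro e
    have : ({v | s e = v ∨ t e = v} : Finset V) = {s e, t e} := by ext; simp [eq_comm]
    rw [this, prod_pair (hst e)]
  simp_rw [hends, ← prod_const]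
  exact prod_comm' fun e v => by simp [and_comm]

lemma sum_spins_prod_one_add_mul_prod_one_add {V E R : Type*} [Fintype V] [Fintype E]
    [DecidableEq V] [CommRing R] (s t : E → V) (hst : ∀ e, s e ≠ t e) (w : E → R) (a : R) :
    ∑ σ : V → ℤˣ, (∏ e, (1 + ((σ (s e) : ℤ) : R) * ((σ (t e) : ℤ) : R) * w e)) *
        ∏ v, (1 + ((σ v : ℤ) : R) * a) =
      2 ^ Fintype.card V *
        ∑ U : Finset E, a ^ #{v | Odd #{e ∈ U | s e = v ∨ t e = v}} * ∏ e ∈ U, w e := by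
  have hbonds : ∀ σ : V → ℤˣ, ∏ e, (1 + ((σ (s e) : ℤ) : R) * ((σ (t e) : ℤ) : R) * w e) =
      ∑ U : Finset E, (∏ v, ((σ v : ℤ) : R) ^ #{e ∈ U | s e = v ∨ t e = v}) * ∏ e ∈ U, w e := by
    intro σ
    rw [prod_one_add, powerset_univ]
    exact sum_congr rfl fun U _ => by
      rw [prod_mul_distrib, prod_mul_eq_prod_pow_card_incident s t hst fun v => ((σ v : ℤ) : R)]
  simp only [hbonds, sum_mul]
  rw [sum_comm, mul_sum]
  refine sum_congr rfl fun U _ => ?_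
  simp only [mul_right_comm _ (∏ e ∈ U, w e), ← sum_mul, ← prod_mul_distrib,
    sum_spins_prod_pow_mul_one_add]
  ring

theorem ising_high_temperature_expansion_general {V E : Type*} [Fintype V] [Fintype E]
    [DecidableEq V]
    (s t : E → V) (hst : ∀ e, s e ≠ t e) (J : E → ℝ) (H : ℝ) :
    (∑ σ : V → ℤˣ,
        Real.exp ((∑ e : E, J e * ((σ (s e) : ℤ) : ℝ) * ((σ (t e) : ℤ) : ℝ)) +
          H * ∑ v : V, ((σ v : ℤ) : ℝ))) =
      2 ^ Fintype.card V * Real.cosh H ^ Fintype.card V * (∏ e : E, Real.cosh (J e)) *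
        ∑ U : Finset E,
          Real.tanh H ^
              (Finset.univ.filter fun v : V =>
                Odd (U.filter fun e => s e = v ∨ t e = v).card).card *
            ∏ e ∈ U, Real.tanh (J e) := by
  have hexp : ∀ σ : V → ℤˣ,
      exp ((∑ e, J e * ((σ (s e) : ℤ) : ℝ) * ((σ (t e) : ℤ) : ℝ)) + H * ∑ v, ((σ v : ℤ) : ℝ)) =
        ((∏ e, cosh (J e)) * cosh H ^ Fintype.card V) *
          ((∏ e, (1 + ((σ (s e) : ℤ) : ℝ) * ((σ (t e) : ℤ) : ℝ) * tanh (J e))) *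
            ∏ v, (1 + ((σ v : ℤ) : ℝ) * tanh H)) := by
    intro σ
    have hbond := exp_sum_mul_units_int univ J fun e => σ (s e) * σ (t e)
    have hfield := exp_sum_mul_units_int univ (fun _ => H) σ
    push_cast at hbond
    simp_rw [exp_add, mul_assoc (J _), mul_sum, hbond, hfield, prod_const, card_univ]
    ring
  rw [sum_congr rfl fun σ _ => hexp σ, ← mul_sum, sum_spins_prod_one_add_mul_prod_one_add s t hst]
  ring

/-- High-temperature series expansion of the Ising partition function in an external field
(equation (32) with explicit constants): summing over spin configurations `σ : V → {−1,+1}`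
(encoded as `V → ℤˣ`), the partition function equals
`2^{|V|} (cosh H)^{|V|} (Π_e cosh(J e)) Σ_{U ⊆ E} (tanh H)^{|odd(U)|} Π_{e∈U} tanh(J e)`. -/
theorem ising_high_temperature_expansion {V E : Type*} [Fintype V] [Fintype E]
    [DecidableEq V] [DecidableEq E]
    (s t : E → V) (hst : ∀ e, s e ≠ t e) (J : E → ℝ) (H : ℝ) :
    (∑ σ : V → ℤˣ,
        Real.exp ((∑ e : E, J e * ((σ (s e) : ℤ) : ℝ) * ((σ (t e) : ℤ) : ℝ)) +
          H * ∑ v : V, ((σ v : ℤ) : ℝ))) =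
      2 ^ Fintype.card V * Real.cosh H ^ Fintype.card V * (∏ e : E, Real.cosh (J e)) *
        ∑ U : Finset E,
          Real.tanh H ^
              (Finset.univ.filter fun v : V =>
                Odd (U.filter fun e => s e = v ∨ t e = v).card).card *
            ∏ e ∈ U, Real.tanh (J e) :=
  ising_high_temperature_expansion_general s t hst J H
end

section
/- Edge marginal of the one-dimensional Ising model with periodic boundary conditions (Appendix B): let n ≥ 3 and J : ZMod n → ℝ. For the Ising probability measure on σ : ZMod n → {−1,1} proportional to Π_{i∈ZMod n} exp(J(i)·σ(i)·σ(i+1)), the probability that σ(k) = σ(k+1) for any fixed k ∈ ZMod n equals (e^{J(k)}/(2·cosh J(k))) · (1 + Π_{i≠k} tanh J(i)) / (1 + Π_{i∈ZMod n} tanh J(i)). Explicitly: (Σ_{σ : σ(k)=σ(k+1)} Π_i e^{J(i)σ(i)σ(i+1)}) / (Σ_σ Π_i e^{J(i)σ(i)σ(i+1)}) = (e^{J(k)}/(2cosh J(k)))·(1 + Π_{i≠k} tanh J(i))/(1 + Π_i tanh J(i)). -/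
/-!
Writing `exp (J σσ') = cosh J + sinh J · σσ'` (as `σσ' = ±1`) and expanding the product over the
edges gives a sum over edge sets `S` of `∏_{S} sinh · ∏_{Sᶜ} cosh · ∏_{i ∈ S} σ_i σ_{i+1}`.
Summed over all spin configurations, the last factor vanishes unless every vertex lies on an
even number of edges of `S`, i.e. unless `S` is invariant under `i ↦ i + 1`, i.e. `S = ∅` or
`S = univ`. Hence `Σ_σ ∏_i (a_i + b_i σ_i σ_{i+1}) = 2ⁿ (∏ a + ∏ b)`. Restricting to
`σ_k = σ_{k+1}` only changes the factor of edge `k` into `(e^{J_k}/2)(1 + σ_k σ_{k+1})`, so the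
same identity evaluates the numerator, and the ratio is the claimed one after dividing by
`∏ cosh`.
-/

open Finset Real

lemma Int.sum_units {M : Type*} [AddCommMonoid M] (f : ℤˣ → M) : ∑ u, f u = f 1 + f (-1) := by
  rw [UnitsInt.univ, sum_pair (by decide)]

lemma ZMod.map_addRight_one_eq_self_iff {n : ℕ} [NeZero n] {S : Finset (ZMod n)} :
    S.map (Equiv.addRight 1).toEmbedding = S ↔ S = ∅ ∨ S = univ := by
  refine ⟨fun h => ?_, ?_⟩
  · refine S.eq_empty_or_nonempty.imp id fun ⟨a, ha⟩ => eq_univ_of_forall fun b => ?_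
    have hreach : ∀ m : ℕ, a + m ∈ S := by
      intro m
      induction m with
      | zero => simpa using ha
      | succ m ih =>
        rw [← h]
        exact mem_map.2 ⟨_, ih, by simp [add_assoc]⟩
    simpa using hreach (b - a).val
  · rintro (rfl | rfl)
    · rfl
    · exact map_univ_equiv _

section SpinSums

variable {R : Type*} [CommRing R]

lemma sum_units_prod_mul_prod {ι : Type*} [Fintype ι] [DecidableEq ι] (A B : Finset ι) :
    ∑ σ : ι → ℤˣ, (∏ j ∈ A, ((σ j : ℤ) : R)) * ∏ j ∈ B, ((σ j : ℤ) : R) =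
      if A = B then 2 ^ Fintype.card ι else 0 := by
  have hsplit (σ : ι → ℤˣ) : (∏ j ∈ A, ((σ j : ℤ) : R)) * ∏ j ∈ B, ((σ j : ℤ) : R) =
      ∏ j, (if j ∈ A then ((σ j : ℤ) : R) else 1) * (if j ∈ B then ((σ j : ℤ) : R) else 1) := by
    rw [prod_mul_distrib, prod_ite_mem, prod_ite_mem, univ_inter, univ_inter]
  have hvertex (j : ι) : ∑ u : ℤˣ, (if j ∈ A then ((u : ℤ) : R) else 1) *
      (if j ∈ B then ((u : ℤ) : R) else 1) = if j ∈ A ↔ j ∈ B then 2 else 0 := by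
    rw [Int.sum_units]
    by_cases hA : j ∈ A <;> by_cases hB : j ∈ B <;> norm_num [hA, hB]
  rw [Fintype.sum_congr _ _ hsplit, ← Fintype.prod_sum fun j (u : ℤˣ) =>
    (if j ∈ A then ((u : ℤ) : R) else 1) * (if j ∈ B then ((u : ℤ) : R) else 1)]
  simp_rw [hvertex, Fintype.prod_ite_zero, ← Finset.ext_iff, prod_const, card_univ]

lemma sum_prod_edge_spins {n : ℕ} [NeZero n] (S : Finset (ZMod n)) :
    ∑ σ : ZMod n → ℤˣ, ∏ i ∈ S, ((σ i : ℤ) : R) * ((σ (i + 1) : ℤ) : R) =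
      if S = ∅ ∨ S = univ then 2 ^ n else 0 := by
  have hshift (σ : ZMod n → ℤˣ) : ∏ i ∈ S, ((σ (i + 1) : ℤ) : R) =
      ∏ j ∈ S.map (Equiv.addRight 1).toEmbedding, ((σ j : ℤ) : R) := by
    rw [prod_map]; rfl
  simp_rw [prod_mul_distrib, hshift, sum_units_prod_mul_prod, ZMod.card]
  exact if_congr (eq_comm.trans ZMod.map_addRight_one_eq_self_iff) rfl rfl

theorem sum_prod_add_mul_spins_cycle {n : ℕ} [NeZero n] (a b : ZMod n → R) :
    ∑ σ : ZMod n → ℤˣ, ∏ i, (a i + b i * (((σ i : ℤ) : R) * ((σ (i + 1) : ℤ) : R))) =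
      2 ^ n * (∏ i, a i + ∏ i, b i) := by
  have hexpand (σ : ZMod n → ℤˣ) :
      ∏ i, (a i + b i * (((σ i : ℤ) : R) * ((σ (i + 1) : ℤ) : R))) =
        ∑ S, ((∏ i ∈ S, b i) * ∏ i ∈ Sᶜ, a i) *
          ∏ i ∈ S, ((σ i : ℤ) : R) * ((σ (i + 1) : ℤ) : R) := by
    simp_rw [add_comm (a _), Fintype.prod_add, prod_mul_distrib]
    exact sum_congr rfl fun S _ => by ring
  simp_rw [hexpand]
  rw [sum_comm]
  simp_rw [← mul_sum, sum_prod_edge_spins]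
  rw [Fintype.sum_eq_add ∅ univ univ_nonempty.ne_empty.symm fun S hS => by simp [hS]]
  simp only [true_or, or_true, if_true, prod_empty, compl_empty, compl_univ, one_mul, mul_one]
  ring

end SpinSums

lemma Real.exp_mul_units_mul_units (t : ℝ) (u v : ℤˣ) :
    exp (t * ((u : ℤ) : ℝ) * ((v : ℤ) : ℝ)) =
      cosh t + sinh t * (((u : ℤ) : ℝ) * ((v : ℤ) : ℝ)) := by
  rcases Int.units_eq_one_or u with rfl | rfl <;> rcases Int.units_eq_one_or v with rfl | rfl <;>
    simp [cosh_add_sinh, ← cosh_sub_sinh, sub_eq_add_neg]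

lemma Real.ite_units_eq_cosh_add_sinh (t : ℝ) (u v : ℤˣ) :
    (if u = v then cosh t + sinh t * (((u : ℤ) : ℝ) * ((v : ℤ) : ℝ)) else 0) =
      exp t / 2 + exp t / 2 * (((u : ℤ) : ℝ) * ((v : ℤ) : ℝ)) := by
  rcases Int.units_eq_one_or u with rfl | rfl <;> rcases Int.units_eq_one_or v with rfl | rfl <;>
    norm_num [← cosh_add_sinh]

section IsingCycle

variable {n : ℕ} [NeZero n] (J : ZMod n → ℝ)

theorem sum_prod_exp_spins_cycle :
    ∑ σ : ZMod n → ℤˣ, ∏ i, exp (J i * ((σ i : ℤ) : ℝ) * ((σ (i + 1) : ℤ) : ℝ)) =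
      2 ^ n * (∏ i, cosh (J i) + ∏ i, sinh (J i)) := by
  simp_rw [exp_mul_units_mul_units, sum_prod_add_mul_spins_cycle]

theorem sum_filter_prod_exp_spins_cycle (k : ZMod n) :
    ∑ σ ∈ univ.filter (fun σ : ZMod n → ℤˣ => σ k = σ (k + 1)),
        ∏ i, exp (J i * ((σ i : ℤ) : ℝ) * ((σ (i + 1) : ℤ) : ℝ)) =
      2 ^ n * (exp (J k) / 2 *
        (∏ i ∈ univ.erase k, cosh (J i) + ∏ i ∈ univ.erase k, sinh (J i))) := by
  have hmarked (σ : ZMod n → ℤˣ) :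
      (if σ k = σ (k + 1) then
          ∏ i, (cosh (J i) + sinh (J i) * (((σ i : ℤ) : ℝ) * ((σ (i + 1) : ℤ) : ℝ))) else 0) =
        ∏ i, (Function.update (fun i => cosh (J i)) k (exp (J k) / 2) i +
          Function.update (fun i => sinh (J i)) k (exp (J k) / 2) i *
            (((σ i : ℤ) : ℝ) * ((σ (i + 1) : ℤ) : ℝ))) := by
    rw [← mul_prod_erase univ _ (mem_univ k), ← mul_prod_erase univ _ (mem_univ k),
      ← ite_zero_mul, ite_units_eq_cosh_add_sinh, Function.update_self, Function.update_self]
    congr 1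
    exact prod_congr rfl fun i hi => by simp [Function.update_of_ne (ne_of_mem_erase hi)]
  simp_rw [sum_filter, exp_mul_units_mul_units, hmarked, sum_prod_add_mul_spins_cycle,
    prod_update_of_mem (mem_univ k), sdiff_singleton_eq_erase, mul_add]

end IsingCycle

theorem ising_cycle_edge_marginal_general (n : ℕ) [NeZero n]
    (J : ZMod n → ℝ) (k : ZMod n) :
    (∑ σ ∈ Finset.univ.filter (fun σ : ZMod n → ℤˣ => σ k = σ (k + 1)),
        ∏ i : ZMod n, Real.exp (J i * ((σ i : ℤ) : ℝ) * ((σ (i + 1) : ℤ) : ℝ))) /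
      (∑ σ : ZMod n → ℤˣ,
        ∏ i : ZMod n, Real.exp (J i * ((σ i : ℤ) : ℝ) * ((σ (i + 1) : ℤ) : ℝ))) =
      Real.exp (J k) / (2 * Real.cosh (J k)) *
          (1 + ∏ i ∈ Finset.univ.erase k, Real.tanh (J i)) /
        (1 + ∏ i : ZMod n, Real.tanh (J i)) := by
  rw [sum_filter_prod_exp_spins_cycle, sum_prod_exp_spins_cycle,
    mul_div_mul_left _ _ (by positivity)]
  have hcosh : ∏ i, cosh (J i) = cosh (J k) * ∏ i ∈ univ.erase k, cosh (J i) :=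
    (mul_prod_erase _ _ (mem_univ k)).symm
  have hcosh_ne (s : Finset (ZMod n)) : ∏ i ∈ s, cosh (J i) ≠ 0 :=
    prod_ne_zero_iff.2 fun i _ => (cosh_pos (J i)).ne'
  simp_rw [tanh_eq_sinh_div_cosh, prod_div_distrib]
  rw [one_add_div (a := ∏ i, sinh (J i)) (hcosh_ne univ), div_div_eq_mul_div, hcosh]
  congr 1
  field_simp [hcosh_ne]

/-- Edge marginal of the one-dimensional Ising model on a cycle of length `n` with
couplings `J : ZMod n → ℝ` (edge `i` joins `i` and `i+1`): the probability that
`σ(k) = σ(k+1)` equals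
`(e^{J k}/(2 cosh(J k)))·(1 + Π_{i≠k} tanh(J i))/(1 + Π_i tanh(J i))`. -/
theorem ising_cycle_edge_marginal (n : ℕ) [NeZero n] (hn : 3 ≤ n)
    (J : ZMod n → ℝ) (k : ZMod n) :
    (∑ σ ∈ Finset.univ.filter (fun σ : ZMod n → ℤˣ => σ k = σ (k + 1)),
        ∏ i : ZMod n, Real.exp (J i * ((σ i : ℤ) : ℝ) * ((σ (i + 1) : ℤ) : ℝ))) /
      (∑ σ : ZMod n → ℤˣ,
        ∏ i : ZMod n, Real.exp (J i * ((σ i : ℤ) : ℝ) * ((σ (i + 1) : ℤ) : ℝ))) =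
      Real.exp (J k) / (2 * Real.cosh (J k)) *
          (1 + ∏ i ∈ Finset.univ.erase k, Real.tanh (J i)) /
        (1 + ∏ i : ZMod n, Real.tanh (J i)) :=
  ising_cycle_edge_marginal_general n J k
end

section
/- Edge marginal of the homogeneous one-dimensional q-state Potts model with periodic boundary conditions (Appendix B): let n ≥ 3, q ≥ 2, and J ∈ ℝ. For the probability measure on x : ZMod n → ZMod q proportional to Π_{i∈ZMod n} exp(J·[x(i) = x(i+1)]), for any fixed k ∈ ZMod n the probability that x(k) = x(k+1) equals e^{J}·( (e^{J}+q−1)^{n−1} + (q−1)(e^{J}−1)^{n−1} ) / ( (e^{J}+q−1)^{n} + (q−1)(e^{J}−1)^{n} ). -/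
/-!
Transfer matrices: with `T a b = exp (J·[a = b])`, the weight of a configuration is the product of
the entries of `T` read around the cycle, so the partition function is `tr Tⁿ`; forcing
`x k = x (k + 1)` replaces the factor of the edge `k` by `e^J · I`, which gives `e^J · tr Tⁿ⁻¹`.
Finally `T = (e^J - 1) I + 𝟙𝟙ᵀ` has the eigenvalue `e^J + q - 1` on the constants and `e^J - 1` on
their `(q - 1)`-dimensional complement.
-/

open Finset

theorem IsIdempotentElem.smul_one_sub_add_smul_pow {R A : Type*} [CommSemiring R] [Ring A]
    [Algebra R A] {P : A} (hP : IsIdempotentElem P) (a b : R) (m : ℕ) :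
    (a • (1 - P) + b • P) ^ m = a ^ m • (1 - P) + b ^ m • P := by
  induction m with
  | zero => simp
  | succ m ih =>
    rw [pow_succ, ih]
    simp only [add_mul, mul_add, smul_mul_smul_comm, hP.one_sub.eq, hP.eq, hP.mul_one_sub_self,
      hP.one_sub_mul_self, smul_zero, add_zero, zero_add, pow_succ]

namespace Matrix

variable {V : Type*} [Fintype V] [DecidableEq V]

theorem sum_prod_path_mul {R : Type*} [CommSemiring R] (M : Matrix V V R) (m : ℕ)
    (f : V → V → R) :
    ∑ z : Fin (m + 1) → V, (∏ j : Fin m, M (z j.castSucc) (z j.succ)) * f (z 0) (z (Fin.last m)) =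
      ∑ a, ∑ b, (M ^ m) a b * f a b := by
  induction m generalizing f with
  | zero =>
    rw [← (Equiv.funUnique (Fin 1) V).symm.sum_comp]
    simp [one_apply]
  | succ m ih =>
    rw [← (Fin.snocEquiv fun _ => V).sum_comp, Fintype.sum_prod_type, Finset.sum_comm]
    simp only [Fin.snocEquiv_apply, Fin.prod_univ_castSucc, Fin.snoc_castSucc, Fin.succ_last,
      Fin.snoc_last, Fin.succ_castSucc]
    convert ih (fun a c => ∑ b, M c b * f a b) using 1
    · simp [Finset.mul_sum, mul_assoc]
    · simp only [pow_succ, mul_apply, Finset.mul_sum, Finset.sum_mul, mul_assoc]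
      exact Finset.sum_congr rfl fun a _ => Finset.sum_comm

theorem sum_prod_cycle_mul {R : Type*} [CommSemiring R] (M N : Matrix V V R) {n : ℕ} [NeZero n]
    (k : ZMod n) :
    ∑ x : ZMod n → V, (∏ i ∈ {k}ᶜ, M (x i) (x (i + 1))) * N (x k) (x (k + 1)) =
      trace (M ^ (n - 1) * N) := by
  obtain ⟨m, rfl⟩ : ∃ m, n = m + 1 := ⟨n - 1, (Nat.succ_pred_eq_of_ne_zero (NeZero.ne n)).symm⟩
  -- walk around the cycle starting just after the edge `k`, which is crossed last
  let e : Fin (m + 1) ≃ ZMod (m + 1) :=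
    (ZMod.finEquiv (m + 1)).toEquiv.trans (Equiv.addLeft (k + 1))
  have he (j : Fin (m + 1)) : e j = k + 1 + ZMod.finEquiv (m + 1) j := rfl
  have he_succ (j : Fin m) : e j.castSucc + 1 = e j.succ := by
    rw [he, he, ← Fin.coeSucc_eq_succ, map_add, map_one, add_assoc]
  have he_zero : e 0 = k + 1 := by rw [he, map_zero, add_zero]
  have he_last : e (Fin.last m) = k := by
    rw [he, add_assoc, add_comm 1, ← map_one (ZMod.finEquiv (m + 1)), ← map_add, Fin.last_add_one,
      map_zero, add_zero]
  have hcompl (g : ZMod (m + 1) → R) : ∏ i ∈ {k}ᶜ, g i = ∏ j : Fin m, g (e j.castSucc) := by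
    rw [← Finset.prod_image (fun a _ b _ h => Fin.castSucc_injective m h) (f := fun j => g (e j)),
      Fin.image_castSucc]
    refine (Finset.prod_equiv e (fun j => ?_) fun _ _ => rfl).symm
    simp [← he_last, e.injective.eq_iff]
  rw [← (e.arrowCongr (Equiv.refl V)).sum_comp, Nat.add_sub_cancel]
  simp only [hcompl, he_succ]
  rw [← he_zero, ← he_last]
  simp only [Equiv.arrowCongr_apply, Function.comp_apply, Equiv.symm_apply_apply, Equiv.refl_apply]
  rw [sum_prod_path_mul M m fun a b => N b a]
  simp [trace, mul_apply]

variable {𝕜 : Type*} [Field 𝕜] [CharZero 𝕜] [Nonempty V]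

omit [DecidableEq V] in
theorem isIdempotentElem_inv_card_smul_allOnes :
    IsIdempotentElem ((Fintype.card V : 𝕜)⁻¹ • of fun _ _ : V => (1 : 𝕜)) := by
  have hq : (Fintype.card V : 𝕜) ≠ 0 := Nat.cast_ne_zero.mpr Fintype.card_ne_zero
  ext a b
  simp [mul_apply, hq]

theorem trace_smul_one_add_allOnes_pow (c : 𝕜) (m : ℕ) :
    ((c • 1 + of fun _ _ : V => (1 : 𝕜)) ^ m).trace =
      (c + Fintype.card V) ^ m + (Fintype.card V - 1) * c ^ m := by
  set q : 𝕜 := (Fintype.card V : 𝕜)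
  have hq : q ≠ 0 := Nat.cast_ne_zero.mpr Fintype.card_ne_zero
  set P : Matrix V V 𝕜 := q⁻¹ • of fun _ _ => 1
  have hsplit : c • 1 + of (fun _ _ : V => (1 : 𝕜)) = c • (1 - P) + (c + q) • P := by
    simp only [P, smul_sub, add_smul, smul_inv_smul₀ hq]
    abel
  have htrace_P : P.trace = 1 := by simp [P, trace, hq, q]
  rw [hsplit, isIdempotentElem_inv_card_smul_allOnes.smul_one_sub_add_smul_pow, trace_add,
    trace_smul, trace_smul, trace_sub, trace_one, htrace_P, smul_eq_mul, smul_eq_mul]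
  ring

end Matrix

noncomputable def pottsTransferMatrix (V : Type*) [DecidableEq V] (J : ℝ) : Matrix V V ℝ :=
  Matrix.of fun a b => Real.exp (J * if a = b then 1 else 0)

theorem pottsTransferMatrix_eq (V : Type*) [DecidableEq V] (J : ℝ) :
    pottsTransferMatrix V J = (Real.exp J - 1) • 1 + Matrix.of fun _ _ => 1 := by
  ext a b
  rcases eq_or_ne a b with rfl | h
  · simp [pottsTransferMatrix]
  · simp [pottsTransferMatrix, h]

theorem trace_pottsTransferMatrix_pow (V : Type*) [Fintype V] [DecidableEq V] [Nonempty V]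
    (J : ℝ) (m : ℕ) :
    (pottsTransferMatrix V J ^ m).trace =
      (Real.exp J + Fintype.card V - 1) ^ m + (Fintype.card V - 1) * (Real.exp J - 1) ^ m := by
  rw [pottsTransferMatrix_eq, Matrix.trace_smul_one_add_allOnes_pow]
  ring

theorem potts_cycle_edge_marginal_general (n q : ℕ) [NeZero n] [NeZero q]
    (J : ℝ) (k : ZMod n) :
    (∑ x ∈ Finset.univ.filter (fun x : ZMod n → ZMod q => x k = x (k + 1)),
        ∏ i : ZMod n, Real.exp (J * (if x i = x (i + 1) then 1 else 0))) /
      (∑ x : ZMod n → ZMod q,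
        ∏ i : ZMod n, Real.exp (J * (if x i = x (i + 1) then 1 else 0))) =
      Real.exp J *
          ((Real.exp J + (q : ℝ) - 1) ^ (n - 1) +
            ((q : ℝ) - 1) * (Real.exp J - 1) ^ (n - 1)) /
        ((Real.exp J + (q : ℝ) - 1) ^ n + ((q : ℝ) - 1) * (Real.exp J - 1) ^ n) := by
  set T := pottsTransferMatrix (ZMod q) J
  have hweight (x : ZMod n → ZMod q) :
      ∏ i : ZMod n, Real.exp (J * (if x i = x (i + 1) then 1 else 0)) =
        (∏ i ∈ {k}ᶜ, T (x i) (x (i + 1))) * T (x k) (x (k + 1)) :=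
    Fintype.prod_eq_prod_compl_mul k _
  have hweight_constrained (x : ZMod n → ZMod q) :
      (if x k = x (k + 1) then ∏ i : ZMod n, Real.exp (J * (if x i = x (i + 1) then 1 else 0))
        else 0) =
        (∏ i ∈ {k}ᶜ, T (x i) (x (i + 1))) * (Real.exp J • 1 : Matrix _ _ ℝ) (x k) (x (k + 1)) := by
    rw [hweight, Matrix.smul_apply, Matrix.one_apply]
    split_ifs with h
    · simp [T, pottsTransferMatrix, h]
    · simp
  rw [Finset.sum_filter, Fintype.sum_congr _ _ hweight_constrained, Fintype.sum_congr _ _ hweight,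
    Matrix.sum_prod_cycle_mul, Matrix.sum_prod_cycle_mul, Matrix.mul_smul, Matrix.mul_one,
    Matrix.trace_smul, ← pow_succ, Nat.sub_add_cancel NeZero.one_le,
    trace_pottsTransferMatrix_pow, trace_pottsTransferMatrix_pow, ZMod.card, smul_eq_mul]

/-- Edge marginal of the homogeneous 1D q-state Potts model on a cycle of length `n`:
the probability that `x(k) = x(k+1)` equals
`e^J·((e^J+q−1)^{n−1} + (q−1)(e^J−1)^{n−1})/((e^J+q−1)^n + (q−1)(e^J−1)^n)`. -/
theorem potts_cycle_edge_marginal (n q : ℕ) [NeZero n] [NeZero q]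
    (hn : 3 ≤ n) (hq : 2 ≤ q) (J : ℝ) (k : ZMod n) :
    (∑ x ∈ Finset.univ.filter (fun x : ZMod n → ZMod q => x k = x (k + 1)),
        ∏ i : ZMod n, Real.exp (J * (if x i = x (i + 1) then 1 else 0))) /
      (∑ x : ZMod n → ZMod q,
        ∏ i : ZMod n, Real.exp (J * (if x i = x (i + 1) then 1 else 0))) =
      Real.exp J *
          ((Real.exp J + (q : ℝ) - 1) ^ (n - 1) +
            ((q : ℝ) - 1) * (Real.exp J - 1) ^ (n - 1)) /
        ((Real.exp J + (q : ℝ) - 1) ^ n + ((q : ℝ) - 1) * (Real.exp J - 1) ^ n) :=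
  potts_cycle_edge_marginal_general n q J k
end
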